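/- arXiv:1811.09379 — 3 statements merged into one kernel-verified Lean document; each statement's English description precedes it below -/
import Mathlib

section
/- Let v₁, ..., v_k be independent Buck measurable polyadicly continuous sequences with continuous Buck distribution functions F₁, ..., F_k. Then their continuous extensions ṽ₁, ..., ṽ_k to the polyadic integers Ω are independent random variables with respect to the Haar probability measure P on Ω. -/
open Filter MeasureTheory Topology
open scoped ENNReal

/-- A sequence is polyadicly continuous if for every `ε > 0` there is a modulus `m` such that
congruence mod `m` forces values `ε`-close. -/
def PolyadiclyContinuous (v : ℕ → ℝ) : Prop :=
  ∀ ε > (0 : ℝ), ∃ m : ℕ, 0 < m ∧ ∀ a b : ℕ, a ≡ b [MOD m] → |v a - v b| < ε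

/-- The arithmetic progression `r + mℕ₀`. -/
def AP (r m : ℕ) : Set ℕ := {n | ∃ j : ℕ, n = r + j * m}

/-- Buck's measure density: the infimum of `∑ 1/mⱼ` over finite covers of `S` by
arithmetic progressions `rⱼ + mⱼℕ₀`. -/
noncomputable def buckOuter (S : Set ℕ) : ℝ :=
  sInf {x | ∃ (k : ℕ) (r : Fin k → ℕ) (m : Fin k → ℕ), (∀ j, 0 < m j) ∧
    S ⊆ (⋃ j, AP (r j) (m j)) ∧ x = ∑ j, (1 : ℝ) / (m j)}

/-- A set `S ⊆ ℕ` is Buck measurable if `μ*(S) + μ*(ℕ \ S) = 1`. -/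
def BuckMeasurableSet (S : Set ℕ) : Prop := buckOuter S + buckOuter Sᶜ = 1

instance (p : Nat.Primes) : Fact (Nat.Prime (p : ℕ)) := ⟨p.2⟩

/-- The compact ring `Ω` of polyadic integers, realized as the product of all rings
of `p`-adic integers. -/
abbrev PolyadicInt : Type := (p : Nat.Primes) → ℤ_[(p : ℕ)]

/-- The natural (dense) embedding of `ℕ` into the polyadic integers. -/
noncomputable def polyadicEmb (n : ℕ) : PolyadicInt := fun p => (n : ℤ_[(p : ℕ)])

noncomputable instance : MeasurableSpace PolyadicInt := borel PolyadicInt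
instance : BorelSpace PolyadicInt := ⟨rfl⟩

/-- The Haar probability measure `P` on the compact ring of polyadic integers. -/
noncomputable def haarP : Measure PolyadicInt :=
  Measure.addHaarMeasure (⊤ : TopologicalSpace.PositiveCompacts PolyadicInt)

namespace PolyProof

instance : haarP.IsAddLeftInvariant := by unfold haarP; infer_instance

lemma haarP_univ : haarP Set.univ = 1 := by
  rw [haarP, ← TopologicalSpace.PositiveCompacts.coe_top (α := PolyadicInt)]
  exact MeasureTheory.Measure.addHaarMeasure_self

/-- The coset of `mΩ` containing `r`. -/
def C (m r : ℕ) : Set PolyadicInt :=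
  {α | ∀ p : Nat.Primes, ((p : ℕ) : ℤ_[(p : ℕ)]) ^ (m.factorization (p : ℕ)) ∣ α p - (r : ℤ_[(p : ℕ)])}

lemma intCast_dvd (p : Nat.Primes) (t : ℕ) (z : ℤ) (h : ((p : ℕ) ^ t : ℤ) ∣ z) :
    ((p : ℕ) : ℤ_[(p : ℕ)]) ^ t ∣ (z : ℤ_[(p : ℕ)]) := by
  obtain ⟨c, rfl⟩ := h
  refine ⟨(c : ℤ_[(p : ℕ)]), ?_⟩
  push_cast
  ring

lemma clopen_ball (p : ℕ) [Fact p.Prime] (k : ℕ) (c : ℤ_[p]) :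
    IsClopen {x : ℤ_[p] | (p : ℤ_[p]) ^ k ∣ x - c} := by
  have hval : ∀ x : ℤ_[p], ((p : ℤ_[p]) ^ k ∣ x - c) ↔ ‖x - c‖ ≤ (p : ℝ) ^ (-(k : ℤ)) := by
    intro x
    rw [PadicInt.norm_le_pow_iff_mem_span_pow, Ideal.mem_span_singleton]
  constructor
  · have : {x : ℤ_[p] | (p : ℤ_[p]) ^ k ∣ x - c}
        = (fun x => ‖x - c‖) ⁻¹' (Set.Iic ((p : ℝ) ^ (-(k : ℤ)))) := by
      ext x; simp [hval x, Set.mem_Iic]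
    rw [this]
    exact IsClosed.preimage (by fun_prop) isClosed_Iic
  · rw [Metric.isOpen_iff]
    intro x hx
    have hp0 : (0 : ℝ) < p := by exact_mod_cast (Fact.out (p := p.Prime)).pos
    refine ⟨(p : ℝ) ^ (-(k : ℤ)), by positivity, fun y hy => ?_⟩
    rw [Set.mem_setOf_eq, hval]
    have h1 : ‖y - x‖ ≤ (p : ℝ) ^ (-(k : ℤ)) := by rw [← dist_eq_norm]; exact le_of_lt hy
    have h2 : ‖x - c‖ ≤ (p : ℝ) ^ (-(k : ℤ)) := (hval x).1 hx
    calc ‖y - c‖ = ‖(y - x) + (x - c)‖ := by ring_nf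
      _ ≤ max ‖y - x‖ ‖x - c‖ := PadicInt.nonarchimedean _ _
      _ ≤ _ := max_le h1 h2

lemma clopen_C (m r : ℕ) : IsClopen (C m r) := by
  classical
  by_cases hm : m = 0
  · have : C m r = Set.univ := by
      ext α
      simp only [C, Set.mem_setOf_eq, Set.mem_univ, iff_true, hm]
      intro p
      simp [Nat.factorization_zero]
    rw [this]; exact isClopen_univ
  set T : Finset Nat.Primes :=
    m.primeFactors.attach.image (fun x => (⟨x.1, Nat.prime_of_mem_primeFactors x.2⟩ : Nat.Primes))
  have hCT : C m r = ⋂ p ∈ T, (fun α : PolyadicInt => α p) ⁻¹'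
      {x : ℤ_[(p : ℕ)] | ((p : ℕ) : ℤ_[(p : ℕ)]) ^ (m.factorization (p : ℕ)) ∣ x - (r : ℤ_[(p : ℕ)])} := by
    ext α
    simp only [C, Set.mem_setOf_eq, Set.mem_iInter, Set.mem_preimage]
    constructor
    · intro h p _; exact h p
    · intro h p
      by_cases hp : (p : ℕ) ∈ m.primeFactors
      · exact h p (Finset.mem_image.2 ⟨⟨(p : ℕ), hp⟩, Finset.mem_attach _ _, Subtype.ext rfl⟩)
      · have : m.factorization (p : ℕ) = 0 := by
          rw [← Nat.support_factorization] at hp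
          exact Finsupp.notMem_support_iff.1 hp
        rw [this, pow_zero]
        exact one_dvd _
  rw [hCT]
  exact isClopen_biInter_finset fun p _ => (clopen_ball _ _ _).preimage (continuous_apply p)

lemma measurable_C (m r : ℕ) : MeasurableSet (C m r) :=
  (clopen_C m r).2.measurableSet

lemma mem_C_sub (m r : ℕ) (α : PolyadicInt) : α ∈ C m r ↔ α - polyadicEmb r ∈ C m 0 := by
  simp only [C, Set.mem_setOf_eq]
  refine forall_congr' fun p => ?_
  have : (α - polyadicEmb r) p - ((0 : ℕ) : ℤ_[(p : ℕ)]) = α p - (r : ℤ_[(p : ℕ)]) := by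
    simp [polyadicEmb, Pi.sub_apply]
  rw [this]

lemma C_add {m : ℕ} {α β : PolyadicInt} (hα : α ∈ C m 0) (hβ : β ∈ C m 0) : α + β ∈ C m 0 := by
  intro p
  have := dvd_add (hα p) (hβ p)
  simpa using this

lemma C_anti {m m' : ℕ} (hm : m ≠ 0) (hm' : m' ≠ 0) (h : m ∣ m') : C m' 0 ⊆ C m 0 := by
  intro α hα p
  refine dvd_trans (pow_dvd_pow _ ?_) (hα p)
  exact (Nat.factorization_le_iff_dvd hm hm').2 h (p : ℕ)

lemma emb_mem_C {m n r : ℕ} (h : n ≡ r [MOD m]) : polyadicEmb n ∈ C m r := by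
  intro p
  set k := m.factorization (p : ℕ) with hk
  have h1 : ((p : ℕ) ^ k : ℤ) ∣ (m : ℤ) := by
    exact_mod_cast Int.natCast_dvd_natCast.2 (Nat.ordProj_dvd m (p : ℕ))
  have h2 : ((p : ℕ) ^ k : ℤ) ∣ (r : ℤ) - (n : ℤ) := h1.trans h.dvd
  have h3 := intCast_dvd p k _ h2
  have h4 : (((r : ℤ) - (n : ℤ) : ℤ) : ℤ_[(p : ℕ)]) = (r : ℤ_[(p : ℕ)]) - (n : ℤ_[(p : ℕ)]) := by
    push_cast; ring
  rw [h4] at h3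
  have : polyadicEmb n p - (r : ℤ_[(p : ℕ)]) = -((r : ℤ_[(p : ℕ)]) - (n : ℤ_[(p : ℕ)])) := by
    simp only [polyadicEmb]; ring
  rw [this]
  exact dvd_neg.2 h3

lemma exists_residue (m : ℕ) (hm : 0 < m) (α : PolyadicInt) :
    ∃ r : ℕ, α ∈ C m r := by
  induction m using Nat.strong_induction_on with
  | _ m IH =>
  rcases eq_or_lt_of_le (Nat.one_le_iff_ne_zero.2 hm.ne') with h1 | h1
  · refine ⟨0, fun p => ?_⟩
    rw [← h1]
    simp [Nat.factorization_one]
  · -- m ≥ 2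
    set p := m.minFac with hp
    have pp : p.Prime := Nat.minFac_prime (by omega)
    set k := m.factorization p with hk
    set m' := ordCompl[p] m with hm'
    have hpdvd : p ∣ m := Nat.minFac_dvd m
    have hkpos : 0 < k := by
      rw [hk]
      exact (Nat.Prime.factorization_pos_of_dvd pp hm.ne' hpdvd)
    have hppow : 1 < p ^ k := by
      calc 1 < p := pp.one_lt
        _ = p ^ 1 := (pow_one p).symm
        _ ≤ p ^ k := Nat.pow_le_pow_right pp.pos hkpos
    have hm'lt : m' < m := Nat.div_lt_self hm hppow
    have hm'pos : 0 < m' := Nat.ordCompl_pos p hm.ne'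
    obtain ⟨r', hr'⟩ := IH m' hm'lt hm'pos
    set P : Nat.Primes := ⟨p, pp⟩ with hP
    haveI : Fact (Nat.Prime (P : ℕ)) := ⟨pp⟩
    have co : (p ^ k).Coprime m' := (Nat.coprime_ordCompl pp hm.ne').pow_left _
    obtain ⟨r, hra, hrb⟩ := Nat.chineseRemainder co ((α P).appr k) r'
    refine ⟨r, fun q => ?_⟩
    by_cases hq : (q : ℕ) = p
    · have hqP : q = P := Subtype.ext hq
      subst hqP
      have hfq : m.factorization (P : ℕ) = k := rfl
      rw [hfq]
      have d1 : ((P : ℕ) : ℤ_[(P : ℕ)]) ^ k ∣ α P - ((α P).appr k : ℤ_[(P : ℕ)]) := by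
        have := PadicInt.appr_spec k (α P)
        rwa [Ideal.mem_span_singleton] at this
      have d2 : ((P : ℕ) : ℤ_[(P : ℕ)]) ^ k ∣ (((α P).appr k : ℤ_[(P : ℕ)]) - (r : ℤ_[(P : ℕ)])) := by
        have hz : (((P : ℕ)) ^ k : ℤ) ∣ ((α P).appr k : ℤ) - (r : ℤ) := by
          exact_mod_cast hra.dvd
        have := intCast_dvd P k _ hz
        have hc : ((((α P).appr k : ℤ) - (r : ℤ) : ℤ) : ℤ_[(P : ℕ)])
            = ((α P).appr k : ℤ_[(P : ℕ)]) - (r : ℤ_[(P : ℕ)]) := by push_cast; ring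
        rw [hc] at this
        exact_mod_cast this
      have := dvd_add d1 d2
      simpa using this
    · have hfq : m.factorization (q : ℕ) = m'.factorization (q : ℕ) := by
        rw [hm', Nat.factorization_ordCompl]
        exact (Finsupp.erase_ne hq).symm
      rw [hfq]
      have d1 := hr' q
      have d2 : ((q : ℕ) : ℤ_[(q : ℕ)]) ^ (m'.factorization (q : ℕ))
          ∣ ((r' : ℤ_[(q : ℕ)]) - (r : ℤ_[(q : ℕ)])) := by
        have hz : ((q : ℕ) ^ (m'.factorization (q : ℕ)) : ℤ) ∣ (r' : ℤ) - (r : ℤ) := by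
          refine dvd_trans ?_ hrb.dvd
          exact_mod_cast Int.natCast_dvd_natCast.2 (Nat.ordProj_dvd m' (q : ℕ))
        have := intCast_dvd q _ _ hz
        have hc : (((r' : ℤ) - (r : ℤ) : ℤ) : ℤ_[(q : ℕ)])
            = (r' : ℤ_[(q : ℕ)]) - (r : ℤ_[(q : ℕ)]) := by push_cast; ring
        rw [hc] at this
        exact this
      have := dvd_add d1 d2
      simpa using this

lemma exists_residue_lt (m : ℕ) (hm : 0 < m) (α : PolyadicInt) :
    ∃ r : ℕ, r < m ∧ α ∈ C m r := by
  obtain ⟨r, hr⟩ := exists_residue m hm α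
  refine ⟨r % m, Nat.mod_lt _ hm, ?_⟩
  rw [mem_C_sub] at hr ⊢
  have hrr : polyadicEmb r - polyadicEmb (r % m) ∈ C m 0 := by
    rw [← mem_C_sub]
    exact emb_mem_C (Nat.mod_modEq r m).symm
  have := C_add hr hrr
  simpa [sub_add_sub_cancel] using this

lemma disjoint_C_aux {m r r' : ℕ} (hr' : r' < m) (hlt : r < r') :
    Disjoint (C m r) (C m r') := by
  rw [Set.disjoint_left]
  rintro α h1 h2
  set d := r' - r with hd
  have hd0 : d ≠ 0 := by omega
  have hdm : d < m := by omega
  have key : ∀ p : Nat.Primes, (p : ℕ) ^ (m.factorization (p : ℕ)) ∣ d := by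
    intro p
    have hdvd := dvd_sub (h1 p) (h2 p)
    have h3 : (α p - (r : ℤ_[(p : ℕ)])) - (α p - (r' : ℤ_[(p : ℕ)]))
        = (((d : ℕ) : ℤ) : ℤ_[(p : ℕ)]) := by
      push_cast [hd, Nat.cast_sub hlt.le]
      ring
    rw [h3] at hdvd
    have hn : ‖(((d : ℕ) : ℤ) : ℤ_[(p : ℕ)])‖
        ≤ ((p : ℕ) : ℝ) ^ (-(m.factorization (p : ℕ) : ℤ)) := by
      rw [PadicInt.norm_le_pow_iff_mem_span_pow, Ideal.mem_span_singleton]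
      exact hdvd
    rw [PadicInt.norm_int_le_pow_iff_dvd] at hn
    exact_mod_cast hn
  have hmdvd : m ∣ d := by
    refine (Nat.factorization_prime_le_iff_dvd (by omega) hd0).1 ?_ 
    intro q hq
    exact (Nat.Prime.pow_dvd_iff_le_factorization hq hd0).1 (key ⟨q, hq⟩)
  exact absurd (Nat.le_of_dvd (by omega) hmdvd) (by omega)

lemma disjoint_C {m r r' : ℕ} (hr : r < m) (hr' : r' < m) (hne : r ≠ r') :
    Disjoint (C m r) (C m r') := by
  rcases Nat.lt_or_ge r r' with h | h
  · exact disjoint_C_aux hr' h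
  · exact (disjoint_C_aux hr (by omega)).symm

lemma measure_C_eq_zero_coset (m r : ℕ) : haarP (C m r) = haarP (C m 0) := by
  have : C m r = (fun α => (-(polyadicEmb r)) + α) ⁻¹' (C m 0) := by
    ext α
    simp only [Set.mem_preimage, neg_add_eq_sub]
    rw [← mem_C_sub]
  rw [this, measure_preimage_add]

lemma measure_C (m : ℕ) (hm : 0 < m) (r : ℕ) : haarP (C m r) = (m : ℝ≥0∞)⁻¹ := by
  have hcover : (⋃ s ∈ Finset.range m, C m s) = Set.univ := by
    rw [Set.eq_univ_iff_forall]
    intro α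
    obtain ⟨s, hs, hmem⟩ := exists_residue_lt m hm α
    exact Set.mem_biUnion (Finset.mem_range.2 hs) hmem
  have hdisj : Set.PairwiseDisjoint (↑(Finset.range m)) (C m) := by
    intro a ha b hb hne
    exact disjoint_C (Finset.mem_range.1 ha) (Finset.mem_range.1 hb) hne
  have hsum := measure_biUnion_finset (μ := haarP) hdisj (fun s _ => measurable_C m s)
  rw [hcover, haarP_univ] at hsum
  have hconst : ∀ s ∈ Finset.range m, haarP (C m s) = haarP (C m 0) := fun s _ =>
    measure_C_eq_zero_coset m s
  rw [Finset.sum_congr rfl hconst, Finset.sum_const, Finset.card_range] at hsum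
  have hmul : (m : ℝ≥0∞) * haarP (C m 0) = 1 := by
    rw [nsmul_eq_mul] at hsum; exact hsum.symm
  have hm0 : (m : ℝ≥0∞) ≠ 0 := by exact_mod_cast Nat.pos_iff_ne_zero.1 hm
  have hx : haarP (C m 0) = (m : ℝ≥0∞)⁻¹ := by
    rw [← one_mul (haarP (C m 0)), ← ENNReal.inv_mul_cancel hm0 (by simp), mul_assoc, hmul,
      mul_one]
  rw [measure_C_eq_zero_coset, hx]

lemma measure_biUnion_C {m : ℕ} (hm : 0 < m) (A : Finset ℕ) (hA : A ⊆ Finset.range m) :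
    haarP (⋃ r ∈ A, C m r) = A.card * (m : ℝ≥0∞)⁻¹ := by
  have hdisj : Set.PairwiseDisjoint (↑A) (C m) := by
    intro a ha b hb hne
    exact disjoint_C (Finset.mem_range.1 (hA ha)) (Finset.mem_range.1 (hA hb)) hne
  rw [measure_biUnion_finset hdisj (fun s _ => measurable_C m s)]
  have : ∀ s ∈ A, haarP (C m s) = (m : ℝ≥0∞)⁻¹ := fun s _ => measure_C m hm s
  rw [Finset.sum_congr rfl this, Finset.sum_const, nsmul_eq_mul]

lemma zero_mem_C (m : ℕ) : (0 : PolyadicInt) ∈ C m 0 := by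
  intro p
  simp

lemma nbhd_basis (α : PolyadicInt) (U : Set PolyadicInt) (hU : U ∈ 𝓝 α) :
    ∃ m : ℕ, 0 < m ∧ ∀ β, β - α ∈ C m 0 → β ∈ U := by
  classical
  rw [nhds_pi, Filter.mem_pi] at hU
  obtain ⟨I, hIfin, t, ht, hIpi⟩ := hU
  have spec : ∀ p : Nat.Primes, p ∈ I → ∃ kk : ℕ,
      {x : ℤ_[(p : ℕ)] | ‖x - α p‖ ≤ ((p : ℕ) : ℝ) ^ (-(kk : ℤ))} ⊆ t p := by
    intro p hp
    obtain ⟨ε, hε, hball⟩ := Metric.mem_nhds_iff.1 (ht p)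
    have hp1 : (1 : ℝ) < ((p : ℕ) : ℝ) := by exact_mod_cast p.2.one_lt
    have hinv : (((p : ℕ) : ℝ))⁻¹ < 1 := by
      rw [inv_lt_one_iff₀]; right; exact hp1
    obtain ⟨kk, hkk⟩ := exists_pow_lt_of_lt_one hε hinv
    refine ⟨kk, fun x hx => hball ?_⟩
    rw [Metric.mem_ball, dist_eq_norm]
    calc ‖x - α p‖ ≤ ((p : ℕ) : ℝ) ^ (-(kk : ℤ)) := hx
      _ = (((p : ℕ) : ℝ))⁻¹ ^ kk := by
          rw [zpow_neg, ← zpow_natCast, ← inv_zpow, zpow_natCast]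
      _ < ε := hkk
  set J : Finset Nat.Primes := hIfin.toFinset with hJ
  set kk : Nat.Primes → ℕ := fun p => if h : p ∈ I then Classical.choose (spec p h) else 0
    with hkk
  set m : ℕ := ∏ p ∈ J, (p : ℕ) ^ (kk p) with hmdef
  have hm0 : 0 < m := Finset.prod_pos fun p _ => pow_pos p.2.pos _
  refine ⟨m, hm0, fun β hβ => ?_⟩
  apply hIpi
  intro p hp
  have hpJ : p ∈ J := hIfin.mem_toFinset.2 hp
  have hdvd : (p : ℕ) ^ (kk p) ∣ m := Finset.dvd_prod_of_mem _ hpJ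
  have hle : kk p ≤ m.factorization (p : ℕ) :=
    (Nat.Prime.pow_dvd_iff_le_factorization p.2 hm0.ne').1 hdvd
  have hdd : ((p : ℕ) : ℤ_[(p : ℕ)]) ^ (kk p) ∣ β p - α p := by
    have := hβ p
    have h0 : (β - α) p - ((0 : ℕ) : ℤ_[(p : ℕ)]) = β p - α p := by
      simp [Pi.sub_apply]
    rw [h0] at this
    exact dvd_trans (pow_dvd_pow _ hle) this
  have hnorm : ‖β p - α p‖ ≤ ((p : ℕ) : ℝ) ^ (-(kk p : ℤ)) := by
    rw [PadicInt.norm_le_pow_iff_mem_span_pow, Ideal.mem_span_singleton]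
    exact hdd
  have hkkp : kk p = Classical.choose (spec p hp) := by simp only [hkk]; rw [dif_pos hp]
  rw [hkkp] at hnorm
  exact Classical.choose_spec (spec p hp) hnorm

lemma unif_single (w : PolyadicInt → ℝ) (hw : Continuous w) {δ : ℝ} (hδ : 0 < δ) :
    ∃ m : ℕ, 0 < m ∧ ∀ α β : PolyadicInt, β - α ∈ C m 0 → |w α - w β| < δ := by
  classical
  have hU : ∀ α : PolyadicInt, (w ⁻¹' Metric.ball (w α) (δ / 2)) ∈ 𝓝 α := fun α =>
    hw.continuousAt.preimage_mem_nhds (Metric.ball_mem_nhds _ (by linarith))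
  have hmV : ∀ α : PolyadicInt, ∃ m : ℕ, 0 < m ∧
      ∀ β, β - α ∈ C m 0 → β ∈ w ⁻¹' Metric.ball (w α) (δ / 2) := fun α =>
    nbhd_basis α _ (hU α)
  choose mV hmV0 hmVsub using hmV
  set V : PolyadicInt → Set PolyadicInt := fun α => {β | β - α ∈ C (mV α) 0} with hV
  have hVopen : ∀ α, IsOpen (V α) := by
    intro α
    have : V α = (fun β => β - α) ⁻¹' (C (mV α) 0) := rfl
    rw [this]
    exact (clopen_C _ _).2.preimage (continuous_id.sub continuous_const)
  have hVmem : ∀ α, α ∈ V α := fun α => by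
    show α - α ∈ C (mV α) 0
    rw [sub_self]
    exact zero_mem_C _
  have hcov : (Set.univ : Set PolyadicInt) ⊆ ⋃ α, V α := fun α _ =>
    Set.mem_iUnion.2 ⟨α, hVmem α⟩
  obtain ⟨s, hs⟩ := isCompact_univ.elim_finite_subcover V hVopen hcov
  refine ⟨∏ α ∈ s, mV α, Finset.prod_pos (fun α _ => hmV0 α), fun α β hβ => ?_⟩
  obtain ⟨α₀, hα₀s, hα₀⟩ := Set.mem_iUnion₂.1 (hs (Set.mem_univ α))
  have hdvd : mV α₀ ∣ ∏ α ∈ s, mV α := Finset.dvd_prod_of_mem _ hα₀s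
  have hsub : C (∏ α ∈ s, mV α) 0 ⊆ C (mV α₀) 0 :=
    C_anti (hmV0 α₀).ne' (Finset.prod_pos (fun α _ => hmV0 α)).ne' hdvd
  have hβ' : β ∈ V α₀ := by
    show β - α₀ ∈ C (mV α₀) 0
    have : β - α₀ = (β - α) + (α - α₀) := by ring
    rw [this]
    exact C_add (hsub hβ) hα₀
  have h1 : |w α - w α₀| < δ / 2 := by
    have := hmVsub α₀ α hα₀
    rw [Set.mem_preimage, Metric.mem_ball, dist_eq_norm] at this
    simpa [Real.norm_eq_abs] using this
  have h2 : |w β - w α₀| < δ / 2 := by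
    have := hmVsub α₀ β hβ'
    rw [Set.mem_preimage, Metric.mem_ball, dist_eq_norm] at this
    simpa [Real.norm_eq_abs] using this
  calc |w α - w β| = |(w α - w α₀) - (w β - w α₀)| := by ring_nf
    _ ≤ |w α - w α₀| + |w β - w α₀| := abs_sub _ _
    _ < δ / 2 + δ / 2 := add_lt_add h1 h2
    _ = δ := by ring

lemma unif_family {ι : Type*} [Fintype ι] (w : ι → PolyadicInt → ℝ)
    (hw : ∀ j, Continuous (w j)) {δ : ℝ} (hδ : 0 < δ) :
    ∃ m : ℕ, 0 < m ∧ ∀ j, ∀ α β : PolyadicInt, β - α ∈ C m 0 → |w j α - w j β| < δ := by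
  classical
  choose mj hmj0 hmj using fun j => unif_single (w j) (hw j) hδ
  refine ⟨∏ j, mj j, Finset.prod_pos (fun j _ => hmj0 j), fun j α β hβ => ?_⟩
  refine hmj j α β ?_
  refine C_anti (hmj0 j).ne' (Finset.prod_pos (fun j _ => hmj0 j)).ne'
    (Finset.dvd_prod_of_mem _ (Finset.mem_univ j)) hβ

lemma buckOuter_nonneg (S : Set ℕ) : 0 ≤ buckOuter S := by
  apply Real.sInf_nonneg
  rintro x ⟨k, r, m, hm, _, rfl⟩
  apply Finset.sum_nonneg
  intro j _
  positivity

lemma buckOuter_le_of_cover {S : Set ℕ} {A : Finset ℕ} {m : ℕ} (hm : 0 < m)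
    (hcov : S ⊆ ⋃ r ∈ A, AP r m) : buckOuter S ≤ (A.card : ℝ) / m := by
  apply csInf_le
  · exact ⟨0, fun x ⟨k, r, mf, hmf, _, hx⟩ => by
      rw [hx]; exact Finset.sum_nonneg fun j _ => by positivity⟩
  · refine ⟨A.card, fun i => ((A.equivFin.symm i : ℕ)), fun _ => m, fun _ => hm, ?_, ?_⟩
    · intro n hn
      obtain ⟨a, ha, hna⟩ := Set.mem_iUnion₂.1 (hcov hn)
      refine Set.mem_iUnion.2 ⟨A.equivFin ⟨a, ha⟩, ?_⟩
      simpa using hna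
    · rw [Finset.sum_const, Finset.card_univ, Fintype.card_fin]
      simp [div_eq_mul_inv, nsmul_eq_mul, one_div]

lemma keyLemma {ι : Type*} [Fintype ι] (w : ι → PolyadicInt → ℝ)
    (hw : ∀ j, Continuous (w j)) (x : ι → ℝ) (G : ℝ → ℝ) (hG : Continuous G)
    (hB : ∀ y : ℝ, BuckMeasurableSet (⋂ j, {n : ℕ | w j (polyadicEmb n) < x j + y}) ∧
      buckOuter (⋂ j, {n : ℕ | w j (polyadicEmb n) < x j + y}) = G y) :
    haarP (⋂ j, {α | w j α < x j}) = ENNReal.ofReal (G 0) := by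
  classical
  set S := ⋂ j, {α : PolyadicInt | w j α < x j} with hS
  have key : ∀ δ : ℝ, 0 < δ →
      ENNReal.ofReal (G (-(2 * δ))) ≤ haarP S ∧ haarP S ≤ ENNReal.ofReal (G (2 * δ)) := by
    intro δ hδ
    obtain ⟨m, hm0, hmod⟩ := unif_family w hw hδ
    set A : Finset ℕ := (Finset.range m).filter (fun r => ∀ j, w j (polyadicEmb r) < x j - δ)
      with hA
    set B : Finset ℕ := (Finset.range m).filter (fun r => ∀ j, w j (polyadicEmb r) < x j + δ)
      with hBdef
    -- Haar side inclusions
    have hAS : (⋃ r ∈ A, C m r) ⊆ S := by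
      rintro α hα
      obtain ⟨r, hrA, hαr⟩ := Set.mem_iUnion₂.1 hα
      have hrA' := (Finset.mem_filter.1 hrA).2
      refine Set.mem_iInter.2 fun j => ?_
      have hsub : α - polyadicEmb r ∈ C m 0 := (mem_C_sub m r α).1 hαr
      have := hmod j (polyadicEmb r) α hsub
      have habs := abs_lt.1 this
      have : w j α < x j := by
        have := hrA' j
        linarith [habs.1]
      exact this
    have hSB : S ⊆ ⋃ r ∈ B, C m r := by
      intro α hα
      obtain ⟨r, hrm, hαr⟩ := exists_residue_lt m hm0 α
      refine Set.mem_iUnion₂.2 ⟨r, ?_, hαr⟩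
      refine Finset.mem_filter.2 ⟨Finset.mem_range.2 hrm, fun j => ?_⟩
      have hsub : α - polyadicEmb r ∈ C m 0 := (mem_C_sub m r α).1 hαr
      have := abs_lt.1 (hmod j (polyadicEmb r) α hsub)
      have hj := Set.mem_iInter.1 hα j
      simp only [Set.mem_setOf_eq] at hj
      linarith [this.2]
    -- Buck side: lower bound via A
    have hembsub : ∀ n : ℕ, polyadicEmb n - polyadicEmb (n % m) ∈ C m 0 := by
      intro n
      rw [← mem_C_sub]
      exact emb_mem_C (Nat.mod_modEq n m).symm
    have hmemAP : ∀ n : ℕ, n ∈ AP (n % m) m := fun n => ⟨n / m, (Nat.mod_add_div' n m).symm⟩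
    have hcov1 : (⋂ j, {n : ℕ | w j (polyadicEmb n) < x j + (-(2 * δ))}) ⊆
        ⋃ r ∈ A, AP r m := by
      intro n hn
      refine Set.mem_iUnion₂.2 ⟨n % m, ?_, hmemAP n⟩
      refine Finset.mem_filter.2 ⟨Finset.mem_range.2 (Nat.mod_lt _ hm0), fun j => ?_⟩
      have := abs_lt.1 (hmod j (polyadicEmb (n % m)) (polyadicEmb n) (hembsub n))
      have hj := Set.mem_iInter.1 hn j
      simp only [Set.mem_setOf_eq] at hj
      linarith [this.2]
    have hGA : G (-(2 * δ)) ≤ (A.card : ℝ) / m := by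
      rw [← (hB (-(2 * δ))).2]
      exact buckOuter_le_of_cover hm0 hcov1
    -- Buck side: upper bound via B
    have hcov2 : (⋂ j, {n : ℕ | w j (polyadicEmb n) < x j + 2 * δ})ᶜ ⊆
        ⋃ r ∈ (Finset.range m \ B), AP r m := by
      intro n hn
      simp only [Set.mem_compl_iff, Set.mem_iInter, not_forall, Set.mem_setOf_eq] at hn
      obtain ⟨j, hj⟩ := hn
      refine Set.mem_iUnion₂.2 ⟨n % m, ?_, hmemAP n⟩
      refine Finset.mem_sdiff.2 ⟨Finset.mem_range.2 (Nat.mod_lt _ hm0), fun hmem => ?_⟩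
      have hrB := (Finset.mem_filter.1 hmem).2 j
      have := abs_lt.1 (hmod j (polyadicEmb (n % m)) (polyadicEmb n) (hembsub n))
      push_neg at hj
      linarith [this.1]
    have hBsub : B ⊆ Finset.range m := Finset.filter_subset _ _
    have hcard : ((Finset.range m \ B).card : ℝ) = (m : ℝ) - B.card := by
      rw [Finset.card_sdiff_of_subset hBsub, Finset.card_range]
      have : B.card ≤ m := by
        have := Finset.card_le_card hBsub
        simpa using this
      push_cast [Nat.cast_sub this]
      ring
    have hGB : (B.card : ℝ) / m ≤ G (2 * δ) := by
      have h1 := (hB (2 * δ)).1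
      rw [BuckMeasurableSet, (hB (2 * δ)).2] at h1
      have h2 : buckOuter (⋂ j, {n : ℕ | w j (polyadicEmb n) < x j + 2 * δ})ᶜ
          ≤ ((Finset.range m \ B).card : ℝ) / m := buckOuter_le_of_cover hm0 hcov2
      rw [hcard] at h2
      have hm' : (0:ℝ) < m := by exact_mod_cast hm0
      have : G (2 * δ) = 1 - buckOuter (⋂ j, {n : ℕ | w j (polyadicEmb n) < x j + 2 * δ})ᶜ := by
        linarith
      rw [this]
      have : ((m : ℝ) - B.card) / m = 1 - B.card / m := by field_simp
      linarith [h2, this]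
    -- measures of the unions
    have hmA : haarP (⋃ r ∈ A, C m r) = ENNReal.ofReal ((A.card : ℝ) / m) := by
      rw [measure_biUnion_C hm0 A (Finset.filter_subset _ _)]
      rw [ENNReal.ofReal_div_of_pos (by exact_mod_cast hm0), div_eq_mul_inv]
      congr 1
      · exact (ENNReal.ofReal_natCast _).symm
      · congr 1
        exact (ENNReal.ofReal_natCast _).symm
    have hmB : haarP (⋃ r ∈ B, C m r) = ENNReal.ofReal ((B.card : ℝ) / m) := by
      rw [measure_biUnion_C hm0 B (Finset.filter_subset _ _)]
      rw [ENNReal.ofReal_div_of_pos (by exact_mod_cast hm0), div_eq_mul_inv]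
      congr 1
      · exact (ENNReal.ofReal_natCast _).symm
      · congr 1
        exact (ENNReal.ofReal_natCast _).symm
    constructor
    · calc ENNReal.ofReal (G (-(2 * δ))) ≤ ENNReal.ofReal ((A.card : ℝ) / m) :=
            ENNReal.ofReal_le_ofReal hGA
        _ = haarP (⋃ r ∈ A, C m r) := hmA.symm
        _ ≤ haarP S := measure_mono hAS
    · calc haarP S ≤ haarP (⋃ r ∈ B, C m r) := measure_mono hSB
        _ = ENNReal.ofReal ((B.card : ℝ) / m) := hmB
        _ ≤ ENNReal.ofReal (G (2 * δ)) := ENNReal.ofReal_le_ofReal hGB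
  -- pass to the limit
  have htend1 : Tendsto (fun δ : ℝ => ENNReal.ofReal (G (-(2 * δ)))) (𝓝[>] (0:ℝ))
      (𝓝 (ENNReal.ofReal (G 0))) := by
    have t0 : Tendsto (fun δ : ℝ => -(2 * δ)) (𝓝[>] (0:ℝ)) (𝓝 0) := by
      have : Tendsto (fun δ : ℝ => -(2 * δ)) (𝓝 (0:ℝ)) (𝓝 (-(2 * 0))) :=
        (Continuous.neg (continuous_const.mul continuous_id)).tendsto 0
      simpa using this.mono_left nhdsWithin_le_nhds
    exact (ENNReal.continuous_ofReal.tendsto _).comp ((hG.tendsto 0).comp t0)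
  have htend2 : Tendsto (fun δ : ℝ => ENNReal.ofReal (G (2 * δ))) (𝓝[>] (0:ℝ))
      (𝓝 (ENNReal.ofReal (G 0))) := by
    have t0 : Tendsto (fun δ : ℝ => 2 * δ) (𝓝[>] (0:ℝ)) (𝓝 0) := by
      have : Tendsto (fun δ : ℝ => 2 * δ) (𝓝 (0:ℝ)) (𝓝 (2 * 0)) :=
        (continuous_const.mul continuous_id).tendsto 0
      simpa using this.mono_left nhdsWithin_le_nhds
    exact (ENNReal.continuous_ofReal.tendsto _).comp ((hG.tendsto 0).comp t0)
  have hev1 : ∀ᶠ δ in 𝓝[>] (0:ℝ), ENNReal.ofReal (G (-(2 * δ))) ≤ haarP S :=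
    eventually_nhdsWithin_of_forall fun δ hδ => (key δ hδ).1
  have hev2 : ∀ᶠ δ in 𝓝[>] (0:ℝ), haarP S ≤ ENNReal.ofReal (G (2 * δ)) :=
    eventually_nhdsWithin_of_forall fun δ hδ => (key δ hδ).2
  exact le_antisymm (ge_of_tendsto htend2 hev2) (le_of_tendsto htend1 hev1)

end PolyProof

open PolyProof

theorem extensions_of_indep_sequences_are_indep (k : ℕ) (v : Fin k → ℕ → ℝ)
    (hp : ∀ j, PolyadiclyContinuous (v j)) (F : Fin k → ℝ → ℝ)
    (hFc : ∀ j, Continuous (F j))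
    (hBm : ∀ j, ∀ x : ℝ, BuckMeasurableSet {n | v j n < x} ∧ buckOuter {n | v j n < x} = F j x)
    (hind : ∀ x : Fin k → ℝ, BuckMeasurableSet (⋂ j, {n | v j n < x j}) ∧
      buckOuter (⋂ j, {n | v j n < x j}) = ∏ j, buckOuter {n | v j n < x j})
    (vt : Fin k → PolyadicInt → ℝ) (hvt : ∀ j, Continuous (vt j))
    (hext : ∀ j, ∀ n : ℕ, vt j (polyadicEmb n) = v j n) :
    ∀ x : Fin k → ℝ,
      haarP (⋂ j, {α | vt j α < x j}) = ∏ j, haarP {α | vt j α < x j} := by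
  intro x
  rcases Nat.eq_zero_or_pos k with hk | hk
  · subst hk
    simp [Set.iInter_of_empty, haarP_univ]
  · haveI : Nonempty (Fin k) := ⟨⟨0, hk⟩⟩
    have hFnonneg : ∀ j, 0 ≤ F j (x j) := fun j => by
      rw [← (hBm j (x j)).2]; exact buckOuter_nonneg _
    have hsingle : ∀ j, haarP {α | vt j α < x j} = ENNReal.ofReal (F j (x j)) := by
      intro j
      have hset : ∀ y : ℝ, (⋂ _ : Fin 1, {n : ℕ | vt j (polyadicEmb n) < x j + y})
          = {n : ℕ | v j n < x j + y} := by
        intro y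
        rw [Set.iInter_const]
        ext n
        simp [hext j n]
      have hkey := keyLemma (ι := Fin 1) (fun _ => vt j) (fun _ => hvt j) (fun _ => x j)
        (fun y => F j (x j + y))
        ((hFc j).comp (continuous_const.add continuous_id))
        (by
          intro y
          rw [hset y]
          exact ⟨(hBm j _).1, (hBm j _).2⟩)
      rw [Set.iInter_const] at hkey
      simpa using hkey
    have hmain : haarP (⋂ j, {α | vt j α < x j}) = ENNReal.ofReal (∏ j, F j (x j)) := by
      have hset : ∀ y : ℝ, (⋂ j, {n : ℕ | vt j (polyadicEmb n) < x j + y})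
          = ⋂ j, {n : ℕ | v j n < x j + y} := by
        intro y; ext n; simp [hext]
      have hkey := keyLemma vt hvt x (fun y => ∏ j, F j (x j + y))
        (continuous_finset_prod _ fun j _ => (hFc j).comp (continuous_const.add continuous_id))
        (by
          intro y
          rw [hset y]
          refine ⟨(hind (fun j => x j + y)).1, ?_⟩
          rw [(hind (fun j => x j + y)).2]
          exact Finset.prod_congr rfl fun j _ => (hBm j _).2)
      simpa using hkey
    rw [hmain, ENNReal.ofReal_prod_of_nonneg (fun j _ => hFnonneg j)]
    exact Finset.prod_congr rfl fun j _ => (hsingle j).symm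
end

section
/- For every continuous function h : Ω → ℝ on the compact ring Ω of polyadic integers, ∫_Ω h dP = lim_{m→∞} (1/m) ∑_{s=0}^{m−1} h(s), where P is the Haar probability measure on Ω and the integers s are viewed as elements of Ω. -/
open Filter MeasureTheory Topology

open scoped Uniformity ENNReal

instance : haarP.IsAddHaarMeasure := Measure.isAddHaarMeasure_addHaarMeasure _

instance : IsProbabilityMeasure haarP := by
  constructor
  have := Measure.addHaarMeasure_self (K₀ := (⊤ : TopologicalSpace.PositiveCompacts PolyadicInt))
  rw [TopologicalSpace.PositiveCompacts.coe_top] at this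
  exact this

lemma dvd_component {N : ℕ} {x : PolyadicInt} (hd : (N : PolyadicInt) ∣ x) (p : Nat.Primes) :
    ((N : ℤ_[(p:ℕ)])) ∣ x p := by
  obtain ⟨z, hz⟩ := hd
  exact ⟨z p, by rw [hz]; simp [Pi.mul_apply]⟩

lemma norm_le_of_pow_dvd {p : Nat.Primes} {e : ℕ} {N : ℕ} (hpe : (p:ℕ)^e ∣ N)
    {z : ℤ_[(p:ℕ)]} (hz : (N : ℤ_[(p:ℕ)]) ∣ z) : ‖z‖ ≤ ((p:ℕ):ℝ) ^ (-(e:ℤ)) := by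
  rw [PadicInt.norm_le_pow_iff_mem_span_pow, Ideal.mem_span_singleton]
  have h1 : ((p:ℕ):ℤ_[(p:ℕ)])^e ∣ (N : ℤ_[(p:ℕ)]) := by
    obtain ⟨c, hc⟩ := hpe
    exact ⟨(c : ℤ_[(p:ℕ)]), by rw [hc]; push_cast; ring⟩
  exact h1.trans hz

set_option maxHeartbeats 1000000 in
lemma key_modulus (h : PolyadicInt → ℝ) (hc : Continuous h) {ε : ℝ} (hε : 0 < ε) :
    ∃ N : ℕ, 0 < N ∧ ∀ x y : PolyadicInt, ((N : PolyadicInt) ∣ x - y) → |h x - h y| ≤ ε := by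
  have hu : UniformContinuous h := CompactSpace.uniformContinuous_of_continuous hc
  have hU : {q : PolyadicInt × PolyadicInt | dist (h q.1) (h q.2) < ε} ∈ 𝓤 PolyadicInt :=
    hu (Metric.dist_mem_uniformity hε)
  rw [uniformity_eq_comap_nhds_zero PolyadicInt, Filter.mem_comap] at hU
  obtain ⟨V, hV, hVU⟩ := hU
  rw [nhds_pi, Filter.mem_pi] at hV
  obtain ⟨I, hIfin, t, ht, htV⟩ := hV
  -- for each p in I choose e p with closed ball ⊆ t p
  have he : ∀ p : Nat.Primes, ∃ e : ℕ, {z : ℤ_[(p:ℕ)] | ‖z‖ ≤ ((p:ℕ):ℝ) ^ (-(e:ℤ))} ⊆ t p := by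
    intro p
    obtain ⟨δ, hδ, hball⟩ := Metric.mem_nhds_iff.1 (ht p)
    have hp1 : (1:ℝ) < (p:ℕ) := by exact_mod_cast (p.2).one_lt
    obtain ⟨e, hee⟩ := exists_pow_lt_of_lt_one hδ (by
      rw [inv_lt_one_iff₀]; right; exact hp1 : ((p:ℕ):ℝ)⁻¹ < 1)
    refine ⟨e, fun z hz => hball ?_⟩
    show dist z ((0:PolyadicInt) p) < δ
    have h0 : ((0:PolyadicInt) p) = 0 := rfl
    rw [h0, dist_zero_right]
    calc ‖z‖ ≤ ((p:ℕ):ℝ) ^ (-(e:ℤ)) := hz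
    _ = (((p:ℕ):ℝ)⁻¹) ^ e := by rw [zpow_neg, zpow_natCast, inv_pow]
    _ < δ := hee
  choose e hesub using he
  set F := hIfin.toFinset with hF
  refine ⟨∏ p ∈ F, (p:ℕ) ^ (e p), Finset.prod_pos (fun p _ => pow_pos p.2.pos _), ?_⟩
  have hsub : ∀ x y : PolyadicInt, x - y ∈ V → dist (h y) (h x) < ε := by
    intro x y hxy
    exact hVU (a := (y, x)) hxy
  intro x y hdvd
  have hxyV : x - y ∈ V := by
    apply htV
    intro p hp
    have hp' : p ∈ F := by simpa [hF] using hp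
    have h1 : ((p:ℕ))^(e p) ∣ ∏ q ∈ F, (q:ℕ) ^ (e q) := Finset.dvd_prod_of_mem _ hp'
    have h2 : ‖(x - y) p‖ ≤ ((p:ℕ):ℝ) ^ (-(e p : ℤ)) :=
      norm_le_of_pow_dvd h1 (dvd_component hdvd p)
    exact hesub p h2
  have hd := hsub x y hxyV
  rw [Real.dist_eq] at hd
  rw [abs_sub_comm]
  exact le_of_lt hd

-- units: if p does not divide M then M is a unit in ℤ_p
lemma isUnit_cast {p : Nat.Primes} {M : ℕ} (hM : 0 < M) (hp : ¬ (p:ℕ) ∣ M) :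
    IsUnit (M : ℤ_[(p:ℕ)]) := by
  rw [PadicInt.isUnit_iff]
  have h1 : ‖((M:ℤ) : ℤ_[(p:ℕ)])‖ ≤ 1 := PadicInt.norm_le_one _
  have h2 : ¬ ‖((M:ℤ) : ℤ_[(p:ℕ)])‖ < 1 := by
    rw [PadicInt.norm_int_lt_one_iff_dvd]
    exact_mod_cast hp
  have : ‖((M:ℤ) : ℤ_[(p:ℕ)])‖ = 1 := le_antisymm h1 (not_lt.1 h2)
  simpa using this

lemma pow_dvd_iff_cast_dvd {p : Nat.Primes} {N : ℕ} (hN : 0 < N) (z : ℤ_[(p:ℕ)]) :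
    (N : ℤ_[(p:ℕ)]) ∣ z ↔ ((p:ℕ) : ℤ_[(p:ℕ)]) ^ (N.factorization (p:ℕ)) ∣ z := by
  set v := N.factorization (p:ℕ)
  have hsplit : N = (p:ℕ)^v * (N / (p:ℕ)^v) := (Nat.ordProj_mul_ordCompl_eq_self N (p:ℕ)).symm
  have hcop : ¬ (p:ℕ) ∣ (N / (p:ℕ)^v) := Nat.not_dvd_ordCompl p.2 hN.ne'
  have hunit : IsUnit ((N / (p:ℕ)^v : ℕ) : ℤ_[(p:ℕ)]) :=
    isUnit_cast (Nat.ordCompl_pos (p:ℕ) hN.ne') hcop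
  constructor
  · intro hdvd
    refine dvd_trans ?_ hdvd
    calc ((p:ℕ):ℤ_[(p:ℕ)])^v ∣ ((p:ℕ):ℤ_[(p:ℕ)])^v * ((N / (p:ℕ)^v : ℕ) : ℤ_[(p:ℕ)]) :=
      dvd_mul_right _ _
    _ = (N : ℤ_[(p:ℕ)]) := by rw [← Nat.cast_pow, ← Nat.cast_mul, ← hsplit]
  · intro hdvd
    have hNeq : (N : ℤ_[(p:ℕ)]) = ((p:ℕ):ℤ_[(p:ℕ)])^v * ((N / (p:ℕ)^v : ℕ) : ℤ_[(p:ℕ)]) := by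
      rw [← Nat.cast_pow, ← Nat.cast_mul, ← hsplit]
    rw [hNeq, hunit.mul_right_dvd]
    exact hdvd

open scoped Classical in
noncomputable def residue (N : ℕ) (x : PolyadicInt) (q : ℕ) : ℕ :=
  if hq : Nat.Prime q then
    letI : Fact (Nat.Prime q) := ⟨hq⟩
    (PadicInt.toZModPow (p := q) (N.factorization q) (x ⟨q, hq⟩)).val
  else 0

lemma exists_rep (N : ℕ) (hN : 0 < N) (x : PolyadicInt) :
    ∃ s : ℕ, s < N ∧ ∀ p : Nat.Primes, (N : ℤ_[(p:ℕ)]) ∣ x p - (s : ℤ_[(p:ℕ)]) := by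
  have hs0 : ∀ q ∈ N.primeFactors, q ^ N.factorization q ≠ 0 := fun q hq =>
    pow_ne_zero _ (Nat.prime_of_mem_primeFactors hq).pos.ne'
  have pp : Set.Pairwise (N.primeFactors : Set ℕ)
      (Function.onFun Nat.Coprime fun q => q ^ N.factorization q) := by
    intro a ha b hb hab
    exact Nat.Coprime.pow _ _
      ((Nat.coprime_primes (Nat.prime_of_mem_primeFactors ha)
        (Nat.prime_of_mem_primeFactors hb)).2 hab)
  obtain ⟨k, hk⟩ := Nat.chineseRemainderOfFinset (residue N x)
    (fun q => q ^ N.factorization q) N.primeFactors hs0 pp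
  refine ⟨k % N, Nat.mod_lt _ hN, ?_⟩
  intro p
  rw [pow_dvd_iff_cast_dvd hN]
  set v := N.factorization (p:ℕ) with hv
  by_cases hpN : (p:ℕ) ∣ N
  · have hmem : (p:ℕ) ∈ N.primeFactors := Nat.mem_primeFactors.2 ⟨p.2, hpN, hN.ne'⟩
    have hkp : k ≡ residue N x (p:ℕ) [MOD (p:ℕ)^v] := hk _ hmem
    have hsk : k % N ≡ k [MOD (p:ℕ)^v] :=
      (Nat.mod_modEq k N).of_dvd (Nat.ordProj_dvd N (p:ℕ))
    have hfinal : (k % N : ℕ) ≡ residue N x (p:ℕ) [MOD (p:ℕ)^v] := hsk.trans hkp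
    -- now show p^v ∣ x p - (k % N)
    have hker : PadicInt.toZModPow (p := (p:ℕ)) v (x p - ((k % N : ℕ) : ℤ_[(p:ℕ)])) = 0 := by
      rw [map_sub, map_natCast]
      have hres : residue N x (p:ℕ) = (PadicInt.toZModPow (p := (p:ℕ)) v (x p)).val := by
        rw [residue, dif_pos p.2]
        congr 1
      have hNe : NeZero ((p:ℕ)^v) := ⟨pow_ne_zero _ p.2.pos.ne'⟩
      have hcast : (((k % N : ℕ)) : ZMod ((p:ℕ)^v)) = ((residue N x (p:ℕ) : ℕ) : ZMod ((p:ℕ)^v)) :=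
        (ZMod.natCast_eq_natCast_iff _ _ _).2 hfinal
      rw [hcast, hres, ZMod.natCast_val, ZMod.cast_id]
      ring
    have hmemker : x p - ((k % N : ℕ) : ℤ_[(p:ℕ)]) ∈
        RingHom.ker (PadicInt.toZModPow (p := (p:ℕ)) v) := hker
    rw [PadicInt.ker_toZModPow, Ideal.mem_span_singleton] at hmemker
    exact hmemker
  · have hv0 : v = 0 := Nat.factorization_eq_zero_of_not_dvd hpN
    rw [hv0, pow_zero]
    exact one_dvd _

def Cset (N s : ℕ) : Set PolyadicInt :=
  {y | ∀ p : Nat.Primes, (N : ℤ_[(p:ℕ)]) ∣ y p - (s : ℤ_[(p:ℕ)])}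

lemma isClosed_Cset (N s : ℕ) (hN : 0 < N) : IsClosed (Cset N s) := by
  have : Cset N s = ⋂ p : Nat.Primes,
      (fun y : PolyadicInt => y p) ⁻¹' {z : ℤ_[(p:ℕ)] | (N : ℤ_[(p:ℕ)]) ∣ z - (s : ℤ_[(p:ℕ)])} := by
    ext y; simp [Cset]
  rw [this]
  refine isClosed_iInter (fun p => IsClosed.preimage (continuous_apply p) ?_)
  have : {z : ℤ_[(p:ℕ)] | (N : ℤ_[(p:ℕ)]) ∣ z - (s : ℤ_[(p:ℕ)])}
      = (fun z : ℤ_[(p:ℕ)] => z - (s : ℤ_[(p:ℕ)])) ⁻¹'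
        {w : ℤ_[(p:ℕ)] | ‖w‖ ≤ ((p:ℕ):ℝ) ^ (-(N.factorization (p:ℕ) : ℤ))} := by
    ext z
    simp only [Set.mem_setOf_eq, Set.mem_preimage]
    rw [pow_dvd_iff_cast_dvd hN, PadicInt.norm_le_pow_iff_mem_span_pow,
      Ideal.mem_span_singleton]
  rw [this]
  exact IsClosed.preimage (by continuity) (isClosed_le continuous_norm continuous_const)

lemma measurable_Cset (N s : ℕ) (hN : 0 < N) : MeasurableSet (Cset N s) :=
  (isClosed_Cset N s hN).measurableSet

lemma Cset_translate (N s : ℕ) :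
    Cset N s = (fun y => -polyadicEmb s + y) ⁻¹' (Cset N 0) := by
  ext y
  simp only [Cset, Set.mem_preimage, Set.mem_setOf_eq]
  constructor
  · intro hy p
    have : (-polyadicEmb s + y) p - ((0:ℕ) : ℤ_[(p:ℕ)]) = y p - (s : ℤ_[(p:ℕ)]) := by
      show -(s : ℤ_[(p:ℕ)]) + y p - ((0:ℕ):ℤ_[(p:ℕ)]) = _
      push_cast
      ring
    rw [this]; exact hy p
  · intro hy p
    have h2 := hy p
    have : (-polyadicEmb s + y) p - ((0:ℕ) : ℤ_[(p:ℕ)]) = y p - (s : ℤ_[(p:ℕ)]) := by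
      show -(s : ℤ_[(p:ℕ)]) + y p - ((0:ℕ):ℤ_[(p:ℕ)]) = _
      push_cast
      ring
    rw [this] at h2; exact h2

lemma int_dvd_of_component (N : ℕ) (hN : 0 < N) (z : ℤ)
    (hz : ∀ p : Nat.Primes, ((N : ℤ) : ℤ_[(p:ℕ)]) ∣ (z : ℤ_[(p:ℕ)])) : (N : ℤ) ∣ z := by
  have hNfac : (N : ℤ) = ∏ q ∈ N.primeFactors, (q:ℤ) ^ N.factorization q := by
    have h1 : ∏ q ∈ N.primeFactors, q ^ N.factorization q = N := by
      rw [← Nat.support_factorization]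
      exact Nat.factorization_prod_pow_eq_self hN.ne'
    conv_lhs => rw [← h1]
    push_cast
    rfl
  rw [hNfac]
  apply Finset.prod_dvd_of_coprime
  · intro a ha b hb hab
    have : IsCoprime (a:ℤ) (b:ℤ) := Nat.isCoprime_iff_coprime.2
      ((Nat.coprime_primes (Nat.prime_of_mem_primeFactors ha)
        (Nat.prime_of_mem_primeFactors hb)).2 hab)
    exact (this.pow : _)
  · intro q hq
    have hqp : Nat.Prime q := Nat.prime_of_mem_primeFactors hq
    set p : Nat.Primes := ⟨q, hqp⟩ with hp
    haveI : Fact (Nat.Prime (p:ℕ)) := ⟨hqp⟩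
    have hzp := hz p
    have hpow : ((q:ℤ_[(p:ℕ)]))^(N.factorization q) ∣ (z : ℤ_[(p:ℕ)]) := by
      have h1 : ((q : ℕ))^(N.factorization q) ∣ N := Nat.ordProj_dvd N q
      obtain ⟨c, hc⟩ := h1
      have h2 : (N : ℤ_[(p:ℕ)]) = (q:ℤ_[(p:ℕ)])^(N.factorization q) * (c : ℤ_[(p:ℕ)]) := by
        exact_mod_cast congrArg (fun n : ℕ => (n : ℤ_[(p:ℕ)])) hc
      rw [show ((N:ℤ) : ℤ_[(p:ℕ)]) = (N : ℤ_[(p:ℕ)]) by push_cast; rfl] at hzp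
      exact dvd_trans ⟨(c : ℤ_[(p:ℕ)]), h2⟩ hzp
    have hnorm : ‖(z : ℤ_[(p:ℕ)])‖ ≤ ((p:ℕ):ℝ) ^ (-(N.factorization q : ℤ)) := by
      rw [PadicInt.norm_le_pow_iff_mem_span_pow, Ideal.mem_span_singleton]
      exact_mod_cast hpow
    rw [PadicInt.norm_int_le_pow_iff_dvd] at hnorm
    exact_mod_cast hnorm

lemma Cset_disj (N : ℕ) (hN : 0 < N) :
    Set.Pairwise (Finset.range N : Set ℕ) (Function.onFun Disjoint (Cset N)) := by
  intro a ha b hb hab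
  simp only [Function.onFun, Set.disjoint_left]
  intro y hya hyb
  apply hab
  have hdvd : ∀ p : Nat.Primes,
      ((N:ℤ) : ℤ_[(p:ℕ)]) ∣ (((b:ℤ) - (a:ℤ) : ℤ) : ℤ_[(p:ℕ)]) := by
    intro p
    have h3 := dvd_sub (hya p) (hyb p)
    have heq : (y p - (a : ℤ_[(p:ℕ)])) - (y p - (b : ℤ_[(p:ℕ)]))
        = (((b:ℤ) - (a:ℤ) : ℤ) : ℤ_[(p:ℕ)]) := by push_cast; ring
    rw [heq] at h3
    have hcast : ((N:ℤ) : ℤ_[(p:ℕ)]) = (N : ℤ_[(p:ℕ)]) := by push_cast; rfl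
    rw [hcast]
    exact h3
  have := int_dvd_of_component N hN _ hdvd
  have hb' : b < N := Finset.mem_range.1 (by exact_mod_cast hb)
  have ha' : a < N := Finset.mem_range.1 (by exact_mod_cast ha)
  have : ((b:ℤ) - (a:ℤ)) = 0 := by
    apply Int.eq_zero_of_dvd_of_natAbs_lt_natAbs this
    simp only [Int.natAbs_natCast]
    omega
  omega


lemma Cset_cover (N : ℕ) (hN : 0 < N) :
    (⋃ s ∈ Finset.range N, Cset N s) = Set.univ := by
  ext x
  simp only [Set.mem_iUnion, Set.mem_univ, iff_true, Finset.mem_range]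
  obtain ⟨t, ht, hdvd⟩ := exists_rep N hN x
  exact ⟨t, ht, hdvd⟩


lemma haarP_Cset (N : ℕ) (hN : 0 < N) (s : ℕ) :
    haarP (Cset N s) = (N : ℝ≥0∞)⁻¹ := by
  have htrans : ∀ t : ℕ, haarP (Cset N t) = haarP (Cset N 0) := by
    intro t
    rw [Cset_translate N t]
    exact measure_preimage_add haarP _ _
  have hsum : ∑ t ∈ Finset.range N, haarP (Cset N t) = 1 := by
    rw [← measure_biUnion_finset (Cset_disj N hN) (fun t _ => measurable_Cset N t hN), Cset_cover N hN]
    exact measure_univ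
  have hconst : ∀ t ∈ Finset.range N, haarP (Cset N t) = haarP (Cset N 0) :=
    fun t _ => htrans t
  rw [Finset.sum_congr rfl hconst, Finset.sum_const, Finset.card_range] at hsum
  have hN0 : (N : ℝ≥0∞) ≠ 0 := by exact_mod_cast hN.ne'
  have hNtop : (N : ℝ≥0∞) ≠ ⊤ := ENNReal.natCast_ne_top N
  rw [htrans s]
  rw [nsmul_eq_mul] at hsum
  calc haarP (Cset N 0) = 1 * haarP (Cset N 0) := (one_mul _).symm
  _ = ((N:ℝ≥0∞)⁻¹ * N) * haarP (Cset N 0) := by rw [ENNReal.inv_mul_cancel hN0 hNtop]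
  _ = (N:ℝ≥0∞)⁻¹ * ((N:ℝ≥0∞) * haarP (Cset N 0)) := by rw [mul_assoc]
  _ = (N:ℝ≥0∞)⁻¹ := by rw [hsum, mul_one]

lemma pi_dvd_of_component {N : ℕ} {x y : PolyadicInt}
    (hcomp : ∀ p : Nat.Primes, (N : ℤ_[(p:ℕ)]) ∣ x p - y p) : (N : PolyadicInt) ∣ x - y := by
  choose z hz using hcomp
  refine ⟨z, funext fun p => ?_⟩
  show x p - y p = (N : ℤ_[(p:ℕ)]) * z p
  exact hz p

lemma integrable_h (h : PolyadicInt → ℝ) (hc : Continuous h) : Integrable h haarP := by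
  apply hc.integrable_of_hasCompactSupport
  exact IsCompact.of_isClosed_subset isCompact_univ (isClosed_tsupport h) (Set.subset_univ _)

lemma integral_close (h : PolyadicInt → ℝ) (hc : Continuous h) (N : ℕ) (hN : 0 < N)
    (ε : ℝ) (hε : 0 ≤ ε)
    (hmod : ∀ x y : PolyadicInt, ((N : PolyadicInt) ∣ x - y) → |h x - h y| ≤ ε) :
    |(∫ α, h α ∂haarP) - (∑ s ∈ Finset.range N, h (polyadicEmb s)) / N| ≤ ε := by
  have hint : Integrable h haarP := integrable_h h hc
  have hsplit : (∫ α, h α ∂haarP) = ∑ s ∈ Finset.range N, ∫ x in Cset N s, h x ∂haarP := by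
    rw [← integral_biUnion_finset (Finset.range N) (fun s _ => measurable_Cset N s hN)
      (Cset_disj N hN) (fun s _ => hint.integrableOn), Cset_cover N hN, setIntegral_univ]
  have hmeasR : ∀ s : ℕ, (haarP (Cset N s)).toReal = (N:ℝ)⁻¹ := by
    intro s
    rw [haarP_Cset N hN s]
    simp
  have hterm : ∀ s ∈ Finset.range N,
      |(∫ x in Cset N s, h x ∂haarP) - (N:ℝ)⁻¹ * h (polyadicEmb s)| ≤ ε * (N:ℝ)⁻¹ := by
    intro s _
    have hfin : haarP (Cset N s) < ⊤ := measure_lt_top _ _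
    have hconst : (∫ _x in Cset N s, h (polyadicEmb s) ∂haarP)
        = (N:ℝ)⁻¹ * h (polyadicEmb s) := by
      rw [setIntegral_const, measureReal_def, hmeasR s, smul_eq_mul]
    have hdiff : (∫ x in Cset N s, h x ∂haarP) - (N:ℝ)⁻¹ * h (polyadicEmb s)
        = ∫ x in Cset N s, (h x - h (polyadicEmb s)) ∂haarP := by
      rw [integral_sub hint.integrableOn (integrableOn_const hfin.ne), hconst]
    rw [hdiff]
    have := norm_setIntegral_le_of_norm_le_const (μ := haarP) (C := ε) hfin
      (f := fun x => h x - h (polyadicEmb s)) ?_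
    · rw [measureReal_def, hmeasR s] at this
      exact this
    · intro x hx
      rw [Real.norm_eq_abs]
      apply hmod
      apply pi_dvd_of_component
      intro p
      exact hx p
  have hB : (∑ s ∈ Finset.range N, h (polyadicEmb s)) / N
      = ∑ s ∈ Finset.range N, (N:ℝ)⁻¹ * h (polyadicEmb s) := by
    rw [Finset.sum_div]
    exact Finset.sum_congr rfl fun s _ => by rw [div_eq_inv_mul]
  rw [hsplit, hB, ← Finset.sum_sub_distrib]
  calc |∑ s ∈ Finset.range N, ((∫ x in Cset N s, h x ∂haarP) - (N:ℝ)⁻¹ * h (polyadicEmb s))|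
      ≤ ∑ s ∈ Finset.range N, |(∫ x in Cset N s, h x ∂haarP) - (N:ℝ)⁻¹ * h (polyadicEmb s)| :=
        Finset.abs_sum_le_sum_abs _ _
    _ ≤ ∑ _s ∈ Finset.range N, ε * (N:ℝ)⁻¹ := Finset.sum_le_sum hterm
    _ = ε := by
        rw [Finset.sum_const, Finset.card_range, nsmul_eq_mul]
        field_simp

lemma cesaro_aux (f : ℕ → ℝ) (N : ℕ) (hN : 0 < N) (ε C : ℝ) (hε : 0 ≤ ε) (hC0 : 0 ≤ C)
    (hCb : ∀ s, |f s| ≤ C)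
    (hkey : ∀ j r : ℕ, r < N → |f (N*j + r) - f r| ≤ ε) (m : ℕ) (hm : 0 < m) :
    |(∑ s ∈ Finset.range m, f s)/m - (∑ r ∈ Finset.range N, f r)/N|
      ≤ ε + 2*N*C/m := by
  set B' := ∑ r ∈ Finset.range N, f r with hB'
  have hBC : |B'| ≤ N * C := by
    calc |B'| ≤ ∑ r ∈ Finset.range N, |f r| := Finset.abs_sum_le_sum_abs _ _
    _ ≤ ∑ _r ∈ Finset.range N, C := Finset.sum_le_sum (fun r _ => hCb r)
    _ = N * C := by rw [Finset.sum_const, Finset.card_range, nsmul_eq_mul]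
  have hblock : ∀ Q : ℕ,
      |∑ s ∈ Finset.range (N*Q), f s - (Q:ℝ) * B'| ≤ (N:ℝ)*Q * ε := by
    intro Q
    induction Q with
    | zero => simp
    | succ Q ih =>
      have h1 : ∑ s ∈ Finset.range (N*(Q+1)), f s
          = ∑ s ∈ Finset.range (N*Q), f s + ∑ i ∈ Finset.range N, f (N*Q + i) := by
        rw [Nat.mul_succ, Finset.sum_range_add]
      have h2 : |∑ i ∈ Finset.range N, f (N*Q + i) - B'| ≤ (N:ℝ) * ε := by
        rw [hB', ← Finset.sum_sub_distrib]
        calc |∑ i ∈ Finset.range N, (f (N*Q + i) - f i)|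
            ≤ ∑ i ∈ Finset.range N, |f (N*Q + i) - f i| := Finset.abs_sum_le_sum_abs _ _
        _ ≤ ∑ _i ∈ Finset.range N, ε := Finset.sum_le_sum (fun i hi =>
            hkey Q i (Finset.mem_range.1 hi))
        _ = (N:ℝ) * ε := by rw [Finset.sum_const, Finset.card_range, nsmul_eq_mul]
      have h3 : ∑ s ∈ Finset.range (N*(Q+1)), f s - ((Q+1:ℕ):ℝ) * B'
          = (∑ s ∈ Finset.range (N*Q), f s - (Q:ℝ) * B')
            + (∑ i ∈ Finset.range N, f (N*Q + i) - B') := by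
        rw [h1]; push_cast; ring
      rw [h3]
      calc |(∑ s ∈ Finset.range (N*Q), f s - (Q:ℝ) * B')
            + (∑ i ∈ Finset.range N, f (N*Q + i) - B')|
          ≤ |∑ s ∈ Finset.range (N*Q), f s - (Q:ℝ) * B'|
            + |∑ i ∈ Finset.range N, f (N*Q + i) - B'| := abs_add_le _ _
      _ ≤ (N:ℝ)*Q * ε + (N:ℝ) * ε := add_le_add ih h2
      _ = (N:ℝ)*((Q+1:ℕ):ℝ) * ε := by push_cast; ring
  set q := m / N with hq
  set t := m % N with ht
  have hqt : N * q + t = m := Nat.div_add_mod m N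
  have htN : t < N := Nat.mod_lt _ hN
  have hsplit : ∑ s ∈ Finset.range m, f s
      = ∑ s ∈ Finset.range (N*q), f s + ∑ i ∈ Finset.range t, f (N*q + i) := by
    rw [← hqt, Finset.sum_range_add]
  have htail : |∑ i ∈ Finset.range t, f (N*q + i)| ≤ (t:ℝ) * C := by
    calc |∑ i ∈ Finset.range t, f (N*q + i)|
        ≤ ∑ i ∈ Finset.range t, |f (N*q + i)| := Finset.abs_sum_le_sum_abs _ _
    _ ≤ ∑ _i ∈ Finset.range t, C := Finset.sum_le_sum (fun i _ => hCb _)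
    _ = (t:ℝ) * C := by rw [Finset.sum_const, Finset.card_range, nsmul_eq_mul]
  set A := ∑ s ∈ Finset.range (N*q), f s with hA
  set Tl := ∑ i ∈ Finset.range t, f (N*q + i) with hTl
  have hm' : (m:ℝ) = (N:ℝ)*q + t := by exact_mod_cast hqt.symm
  have hmpos : (0:ℝ) < m := by exact_mod_cast hm
  have hNpos : (0:ℝ) < N := by exact_mod_cast hN
  have hid : (A + Tl)/(m:ℝ) - B'/N
      = (A - (q:ℝ)*B')/m + Tl/m - ((t:ℝ) * B')/((m:ℝ)*N) := by
    rw [hm']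
    have hd : (0:ℝ) < (N:ℝ)*q + t := by rw [← hm']; exact hmpos
    field_simp
    ring
  have hNq_le : (N:ℝ)*q ≤ m := by
    rw [hm']; exact le_add_of_nonneg_right (by positivity)
  have htN' : (t:ℝ) ≤ N := by exact_mod_cast htN.le
  have e1 : |(A - (q:ℝ)*B')/(m:ℝ)| ≤ ε := by
    rw [abs_div, abs_of_pos hmpos]
    rw [div_le_iff₀ hmpos]
    calc |A - (q:ℝ)*B'| ≤ (N:ℝ)*q * ε := hblock q
    _ ≤ (m:ℝ) * ε := by nlinarith
    _ = ε * m := mul_comm _ _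
  have e2 : |Tl/(m:ℝ)| ≤ (N:ℝ)*C/m := by
    rw [abs_div, abs_of_pos hmpos]
    have h1 : |Tl| ≤ (N:ℝ)*C := htail.trans (by nlinarith)
    gcongr
  have e3 : |((t:ℝ) * B')/((m:ℝ)*N)| ≤ (N:ℝ)*C/m := by
    rw [abs_div, abs_mul, abs_of_nonneg (by positivity : (0:ℝ) ≤ (t:ℝ)),
      abs_of_pos (by positivity : (0:ℝ) < (m:ℝ)*N)]
    rw [div_le_div_iff₀ (by positivity) hmpos]
    have hB0 := abs_nonneg B'
    have h4 : (t:ℝ) * |B'| ≤ (N:ℝ) * ((N:ℝ)*C) :=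
      mul_le_mul htN' hBC hB0 hNpos.le
    nlinarith
  rw [hsplit, hid]
  have habs : |(A - (q:ℝ)*B')/m + Tl/m - ((t:ℝ) * B')/((m:ℝ)*N)|
      ≤ |(A - (q:ℝ)*B')/m| + |Tl/m| + |((t:ℝ) * B')/((m:ℝ)*N)| := by
    rw [sub_eq_add_neg]
    exact (abs_add_three _ _ _).trans (by rw [abs_neg])
  have hfin : |(A - (q:ℝ)*B')/m| + |Tl/m| + |((t:ℝ) * B')/((m:ℝ)*N)|
      ≤ ε + 2*N*C/m := by
    have : (N:ℝ)*C/m + (N:ℝ)*C/m = 2*N*C/m := by ring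
    linarith
  exact habs.trans hfin


theorem haar_integral_eq_limit_of_averages (h : PolyadicInt → ℝ) (hc : Continuous h) :
    Tendsto (fun m : ℕ => (∑ s ∈ Finset.range m, h (polyadicEmb s)) / m) atTop
      (nhds (∫ α, h α ∂haarP)) := by
  obtain ⟨C0, hC0⟩ := IsCompact.exists_bound_of_continuousOn isCompact_univ hc.continuousOn
  set C := max C0 0 with hCdef
  have hC0' : (0:ℝ) ≤ C := le_max_right _ _
  have hCb : ∀ x : PolyadicInt, |h x| ≤ C := fun x =>
    (hC0 x (Set.mem_univ x)).trans (le_max_left _ _)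
  rw [Metric.tendsto_atTop]
  intro ε hε
  have hε4 : 0 < ε/4 := by linarith
  obtain ⟨N, hN, hmod⟩ := key_modulus h hc hε4
  have hIclose : |(∫ α, h α ∂haarP) - (∑ s ∈ Finset.range N, h (polyadicEmb s)) / N| ≤ ε/4 :=
    integral_close h hc N hN (ε/4) hε4.le hmod
  have hkey2 : ∀ j r : ℕ, r < N →
      |h (polyadicEmb (N*j + r)) - h (polyadicEmb r)| ≤ ε/4 := by
    intro j r _
    apply hmod
    apply pi_dvd_of_component
    intro p
    refine ⟨(j : ℤ_[(p:ℕ)]), ?_⟩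
    show ((N*j + r : ℕ) : ℤ_[(p:ℕ)]) - ((r:ℕ) : ℤ_[(p:ℕ)]) = _
    push_cast
    ring
  obtain ⟨M0, hM0⟩ := exists_nat_gt (8*N*C/ε)
  refine ⟨max M0 1, fun m hm => ?_⟩
  have hm1 : 1 ≤ m := le_trans (le_max_right M0 1) hm
  have hmpos : 0 < m := hm1
  have hmM0 : (M0:ℝ) ≤ m := by exact_mod_cast le_trans (le_max_left M0 1) hm
  have hmR : (0:ℝ) < m := by exact_mod_cast hmpos
  have hNC : 2*N*C/m < ε/4 := by
    rw [div_lt_iff₀ hmR]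
    have h8 : 8*N*C/ε < m := lt_of_lt_of_le hM0 hmM0
    rw [div_lt_iff₀ hε] at h8
    nlinarith
  have hces := cesaro_aux (fun s => h (polyadicEmb s)) N hN (ε/4) C hε4.le hC0'
    (fun s => hCb _) hkey2 m hmpos
  rw [Real.dist_eq]
  have htri : |(∑ s ∈ Finset.range m, h (polyadicEmb s)) / (m:ℝ) - ∫ α, h α ∂haarP|
      ≤ |(∑ s ∈ Finset.range m, h (polyadicEmb s)) / (m:ℝ)
          - (∑ r ∈ Finset.range N, h (polyadicEmb r)) / N|
        + |(∫ α, h α ∂haarP) - (∑ r ∈ Finset.range N, h (polyadicEmb r)) / N| := by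
    have heq : (∑ s ∈ Finset.range m, h (polyadicEmb s)) / (m:ℝ) - ∫ α, h α ∂haarP
        = ((∑ s ∈ Finset.range m, h (polyadicEmb s)) / (m:ℝ)
            - (∑ r ∈ Finset.range N, h (polyadicEmb r)) / N)
          + -((∫ α, h α ∂haarP) - (∑ r ∈ Finset.range N, h (polyadicEmb r)) / N) := by ring
    rw [heq]
    exact (abs_add_le _ _).trans (by rw [abs_neg])
  calc |(∑ s ∈ Finset.range m, h (polyadicEmb s)) / (m:ℝ) - ∫ α, h α ∂haarP|
      ≤ |(∑ s ∈ Finset.range m, h (polyadicEmb s)) / (m:ℝ)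
          - (∑ r ∈ Finset.range N, h (polyadicEmb r)) / N|
        + |(∫ α, h α ∂haarP) - (∑ r ∈ Finset.range N, h (polyadicEmb r)) / N| := htri
  _ ≤ (ε/4 + 2*N*C/m) + ε/4 := add_le_add hces hIclose
  _ < (ε/4 + ε/4) + ε/4 := by linarith
  _ < ε := by linarith
end

section
/- A bounded real-valued sequence is weakly Buck measurable if and only if it is weakly polyadicly continuous. -/
open Filter MeasureTheory Topology

/-- A sequence is weakly Buck measurable if the sets `{n | v n < x}` are Buck measurable for
all `x` outside an at most countable exceptional set. -/
def WeaklyBuckMeasurable (v : ℕ → ℝ) : Prop :=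
  ∃ C : Set ℝ, C.Countable ∧ ∀ x ∉ C, BuckMeasurableSet {n | v n < x}

/-- A sequence is weakly polyadicly continuous if for all `ε, δ > 0` there is a Buck measurable
set `A` of measure `< δ` and a modulus `m` such that congruence mod `m` forces values
`ε`-close outside `A`. -/
def WeaklyPolyadiclyContinuous (v : ℕ → ℝ) : Prop :=
  ∀ ε > (0 : ℝ), ∀ δ > (0 : ℝ), ∃ A : Set ℕ, BuckMeasurableSet A ∧ buckOuter A < δ ∧
    ∃ m : ℕ, 0 < m ∧ ∀ n₁ n₂ : ℕ, n₁ ∉ A → n₂ ∉ A → n₁ ≡ n₂ [MOD m] → |v n₁ - v n₂| < ε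

namespace Buck
open scoped Classical

def coverSet (S : Set ℕ) : Set ℝ :=
  {x | ∃ (k : ℕ) (r : Fin k → ℕ) (m : Fin k → ℕ), (∀ j, 0 < m j) ∧
    S ⊆ (⋃ j, AP (r j) (m j)) ∧ x = ∑ j, (1 : ℝ) / (m j)}

lemma buckOuter_eq (S : Set ℕ) : buckOuter S = sInf (coverSet S) := rfl

lemma coverSet_nonempty (S : Set ℕ) : (coverSet S).Nonempty := by
  refine ⟨1, 1, (fun _ => 0), (fun _ => 1), fun j => one_pos, ?_, by simp⟩
  intro n _
  exact Set.mem_iUnion.2 ⟨0, ⟨n, by simp⟩⟩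

lemma coverSet_bddBelow (S : Set ℕ) : BddBelow (coverSet S) := by
  refine ⟨0, ?_⟩
  rintro x ⟨k, r, m, hm, hc, rfl⟩
  exact Finset.sum_nonneg fun j _ => by positivity

lemma buckOuter_nonneg (S : Set ℕ) : 0 ≤ buckOuter S :=
  le_csInf (coverSet_nonempty S) fun x hx => by
    obtain ⟨k, r, m, hm, hc, rfl⟩ := hx
    exact Finset.sum_nonneg fun j _ => by positivity

lemma buckOuter_le_sum {S : Set ℕ} {k : ℕ} {r m : Fin k → ℕ} (hm : ∀ j, 0 < m j)
    (hc : S ⊆ ⋃ j, AP (r j) (m j)) : buckOuter S ≤ ∑ j, (1 : ℝ) / (m j) :=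
  csInf_le (coverSet_bddBelow S) ⟨k, r, m, hm, hc, rfl⟩

lemma exists_cover_lt {S : Set ℕ} {y : ℝ} (hy : buckOuter S < y) :
    ∃ (k : ℕ) (r : Fin k → ℕ) (m : Fin k → ℕ), (∀ j, 0 < m j) ∧
      S ⊆ (⋃ j, AP (r j) (m j)) ∧ ∑ j, (1 : ℝ) / (m j) < y := by
  obtain ⟨x, hx, hxy⟩ := exists_lt_of_csInf_lt (coverSet_nonempty S) hy
  obtain ⟨k, r, m, hm, hc, rfl⟩ := hx
  exact ⟨k, r, m, hm, hc, hxy⟩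

lemma buckOuter_mono {S T : Set ℕ} (h : S ⊆ T) : buckOuter S ≤ buckOuter T := by
  apply le_csInf (coverSet_nonempty T)
  rintro x ⟨k, r, m, hm, hc, rfl⟩
  exact buckOuter_le_sum hm (h.trans hc)

lemma buckOuter_union_le (S T : Set ℕ) :
    buckOuter (S ∪ T) ≤ buckOuter S + buckOuter T := by
  refine le_of_forall_pos_le_add fun γ hγ => ?_
  obtain ⟨k₁, r₁, m₁, hm₁, hc₁, hs₁⟩ := exists_cover_lt (lt_add_of_pos_right (buckOuter S) (by positivity : (0:ℝ) < γ/2))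
  obtain ⟨k₂, r₂, m₂, hm₂, hc₂, hs₂⟩ := exists_cover_lt (lt_add_of_pos_right (buckOuter T) (by positivity : (0:ℝ) < γ/2))
  set rr : Fin (k₁ + k₂) → ℕ := Fin.addCases r₁ r₂ with hrr
  set mm : Fin (k₁ + k₂) → ℕ := Fin.addCases m₁ m₂ with hmm
  have key : buckOuter (S ∪ T) ≤ ∑ j, (1:ℝ) / (mm j) := by
    apply buckOuter_le_sum (r := rr)
    · intro j
      refine Fin.addCases (fun i => ?_) (fun i => ?_) j
      · simpa [hmm] using hm₁ i
      · simpa [hmm] using hm₂ i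
    · intro n hn
      rcases hn with hn | hn
      · obtain ⟨j, hj⟩ := Set.mem_iUnion.1 (hc₁ hn)
        refine Set.mem_iUnion.2 ⟨Fin.castAdd k₂ j, ?_⟩
        simpa [hrr, hmm] using hj
      · obtain ⟨j, hj⟩ := Set.mem_iUnion.1 (hc₂ hn)
        refine Set.mem_iUnion.2 ⟨Fin.natAdd k₁ j, ?_⟩
        simpa [hrr, hmm] using hj
  have hsum : ∑ j, (1:ℝ) / (mm j)
      = (∑ j, (1:ℝ) / (m₁ j)) + ∑ j, (1:ℝ) / (m₂ j) := by
    rw [Fin.sum_univ_add]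
    congr 1 <;> apply Finset.sum_congr rfl <;> intro i _ <;> simp [hmm]
  calc buckOuter (S ∪ T) ≤ _ := key
    _ = _ := hsum
    _ ≤ (buckOuter S + γ/2) + (buckOuter T + γ/2) := add_le_add hs₁.le hs₂.le
    _ = buckOuter S + buckOuter T + γ := by ring



lemma card_filter_AP_le (N r m : ℕ) (hm : 0 < m) :
    ((Finset.range N).filter (· ∈ AP r m)).card ≤ N / m + 1 := by
  have hsub : (Finset.range N).filter (· ∈ AP r m) ⊆
      (Finset.range (N / m + 1)).image (fun j => r + j * m) := by
    intro n hn
    rw [Finset.mem_filter, Finset.mem_range] at hn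
    obtain ⟨hN, j, rfl⟩ := hn
    refine Finset.mem_image.2 ⟨j, Finset.mem_range.2 ?_, rfl⟩
    have : j * m ≤ N := le_of_lt (lt_of_le_of_lt (Nat.le_add_left _ _) hN)
    exact Nat.lt_succ_of_le ((Nat.le_div_iff_mul_le hm).2 this)
  calc _ ≤ _ := Finset.card_le_card hsub
    _ ≤ _ := Finset.card_image_le.trans (by simp)

lemma le_buckOuter_of_counts (S : Set ℕ) (c b : ℝ)
    (hc : ∀ N : ℕ, c * N - b ≤ (((Finset.range N).filter (· ∈ S)).card : ℝ)) :
    c ≤ buckOuter S := by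
  apply le_csInf (coverSet_nonempty S)
  rintro x ⟨k, r, m, hm, hcov, rfl⟩
  set w : ℝ := ∑ j, (1 : ℝ) / (m j) with hw
  have key : ∀ N : ℕ, 0 < N → c ≤ w + (b + k) / N := by
    intro N hN
    have hcard : (((Finset.range N).filter (· ∈ S)).card : ℝ) ≤ N * w + k := by
      have hsub : (Finset.range N).filter (· ∈ S) ⊆
          Finset.univ.biUnion (fun j : Fin k =>
            (Finset.range N).filter (· ∈ AP (r j) (m j))) := by
        intro n hn
        rw [Finset.mem_filter] at hn
        obtain ⟨j, hj⟩ := Set.mem_iUnion.1 (hcov hn.2)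
        exact Finset.mem_biUnion.2 ⟨j, Finset.mem_univ _, Finset.mem_filter.2 ⟨hn.1, hj⟩⟩
      have h1 : ((Finset.range N).filter (· ∈ S)).card ≤
          ∑ j : Fin k, ((Finset.range N).filter (· ∈ AP (r j) (m j))).card :=
        (Finset.card_le_card hsub).trans (Finset.card_biUnion_le)
      have h2 : (∑ j : Fin k, (((Finset.range N).filter (· ∈ AP (r j) (m j))).card : ℝ))
          ≤ ∑ j : Fin k, ((N : ℝ) * (1 / (m j)) + 1) := by
        apply Finset.sum_le_sum
        intro j _
        have := card_filter_AP_le N (r j) (m j) (hm j)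
        calc ((((Finset.range N).filter (· ∈ AP (r j) (m j))).card : ℕ) : ℝ)
            ≤ ((N / m j + 1 : ℕ) : ℝ) := by exact_mod_cast this
          _ ≤ (N : ℝ) / (m j) + 1 := by
              push_cast
              have : ((N / m j : ℕ) : ℝ) ≤ (N : ℝ) / (m j) := Nat.cast_div_le
              linarith
          _ = (N : ℝ) * (1 / (m j)) + 1 := by ring
      calc (((Finset.range N).filter (· ∈ S)).card : ℝ) ≤ _ := by exact_mod_cast h1
        _ ≤ _ := h2
        _ = N * w + k := by rw [Finset.sum_add_distrib, ← Finset.mul_sum]; simp [hw]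
    have := (hc N).trans hcard
    have hN' : (0:ℝ) < N := by exact_mod_cast hN
    have h3 : (c - w - (b + ↑k) / ↑N) * N ≤ 0 := by
      have : (b + ↑k) / ↑N * N = b + k := by field_simp
      nlinarith
    nlinarith [mul_pos hN' hN']
  have hlim : Tendsto (fun N : ℕ => w + (b + k) / N) atTop (nhds w) := by
    have := tendsto_const_div_atTop_nhds_zero_nat (b + k)
    simpa using tendsto_const_nhds.add this
  refine ge_of_tendsto hlim ?_
  filter_upwards [eventually_gt_atTop 0] with N hN using key N hN



lemma buckOuter_residues_le (M N₀ : ℕ) (hM : 0 < M) (R : Finset ℕ)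
    (S : Set ℕ) (h : ∀ n ∈ S, N₀ ≤ n → n % M ∈ R) :
    buckOuter S ≤ (R.card : ℝ) / M := by
  refine le_of_forall_pos_le_add fun γ hγ => ?_
  obtain ⟨K, hK⟩ := exists_nat_gt ((N₀ : ℝ) / γ)
  have hK0 : 0 < K := by
    by_contra hc
    push_neg at hc
    interval_cases K
    simp at hK
    have : (0:ℝ) ≤ (N₀ : ℝ) / γ := by positivity
    linarith
  have hKγ : (N₀ : ℝ) / K ≤ γ := by
    rw [div_le_iff₀ (by exact_mod_cast hK0)]
    rw [div_lt_iff₀ hγ] at hK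
    nlinarith
  set rr : Fin (R.card + N₀) → ℕ :=
    Fin.addCases (fun i => ((R.orderIsoOfFin rfl i : ℕ))) (fun i : Fin N₀ => (i : ℕ)) with hrr
  set mm : Fin (R.card + N₀) → ℕ := Fin.addCases (fun _ => M) (fun _ => K) with hmm
  have key : buckOuter S ≤ ∑ j, (1 : ℝ) / (mm j) := by
    apply buckOuter_le_sum (r := rr)
    · intro j
      refine Fin.addCases (fun i => ?_) (fun i => ?_) j <;> simp [hmm, hM, hK0]
    · intro n hn
      by_cases hn0 : n < N₀
      · refine Set.mem_iUnion.2 ⟨Fin.natAdd R.card ⟨n, hn0⟩, ?_⟩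
        refine ⟨0, ?_⟩
        have e : rr (Fin.natAdd R.card ⟨n, hn0⟩) = n := by
          simp only [hrr, Fin.addCases_right]
        rw [e]
        simp
      · push_neg at hn0
        have hmem : n % M ∈ R := h n hn hn0
        obtain ⟨⟨r', hr'⟩, hr'eq⟩ := (R.orderIsoOfFin rfl).surjective ⟨n % M, hmem⟩
        refine Set.mem_iUnion.2 ⟨Fin.castAdd N₀ ⟨r', hr'⟩, ?_⟩
        refine ⟨n / M, ?_⟩
        simp only [hrr, hmm, Fin.addCases_left]
        have : ((R.orderIsoOfFin rfl ⟨r', hr'⟩ : ℕ)) = n % M := by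
          rw [hr'eq]
        rw [this]
        rw [Nat.mod_add_div' n M]
  have hsum : ∑ j, (1 : ℝ) / (mm j) = (R.card : ℝ) / M + (N₀ : ℝ) / K := by
    rw [Fin.sum_univ_add]
    have e1 : ∀ i : Fin R.card, (1:ℝ) / (mm (Fin.castAdd N₀ i)) = 1 / M := by
      intro i; simp [hmm]
    have e2 : ∀ i : Fin N₀, (1:ℝ) / (mm (Fin.natAdd R.card i)) = 1 / K := by
      intro i; simp [hmm]
    rw [Finset.sum_congr rfl (fun i _ => e1 i), Finset.sum_congr rfl (fun i _ => e2 i)]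
    simp [div_eq_mul_inv, mul_comm]
  calc buckOuter S ≤ _ := key
    _ = _ := hsum
    _ ≤ (R.card : ℝ) / M + γ := by linarith



lemma buckOuter_residues_ge (M N₀ : ℕ) (hM : 0 < M) (R : Finset ℕ)
    (hR : R ⊆ Finset.range M) (S : Set ℕ) (h : ∀ n, N₀ ≤ n → n % M ∈ R → n ∈ S) :
    (R.card : ℝ) / M ≤ buckOuter S := by
  have hM' : (0:ℝ) < M := by exact_mod_cast hM
  apply le_buckOuter_of_counts S ((R.card : ℝ) / M) (R.card * (N₀ + 2))
  intro N
  set t : ℕ := N / M - (N₀ + 1) with ht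
  set T : Finset ℕ := R.biUnion (fun r => (Finset.range t).image (fun j => r + (N₀ + j) * M))
    with hT
  have hmod : ∀ r ∈ R, ∀ j : ℕ, (r + (N₀ + j) * M) % M = r := by
    intro r hr j
    have hrM : r < M := Finset.mem_range.1 (hR hr)
    simp [Nat.add_mul_mod_self_right, Nat.mod_eq_of_lt hrM]
  have hTsub : T ⊆ (Finset.range N).filter (· ∈ S) := by
    intro n hn
    rw [hT, Finset.mem_biUnion] at hn
    obtain ⟨r, hr, hn⟩ := hn
    rw [Finset.mem_image] at hn
    obtain ⟨j, hj, rfl⟩ := hn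
    rw [Finset.mem_range] at hj
    have hrM : r < M := Finset.mem_range.1 (hR hr)
    have hle : N₀ ≤ r + (N₀ + j) * M := by
      have h0 : N₀ ≤ (N₀ + j) * M :=
        le_trans (Nat.le_add_right N₀ j) (Nat.le_mul_of_pos_right _ hM)
      omega
    refine Finset.mem_filter.2 ⟨Finset.mem_range.2 ?_, ?_⟩
    · have h1 : N₀ + j + 1 ≤ N / M := by omega
      have h2 : (N₀ + j + 1) * M ≤ N := (Nat.le_div_iff_mul_le hM).1 h1
      calc r + (N₀ + j) * M < M + (N₀ + j) * M := by omega
        _ = (N₀ + j + 1) * M := by ring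
        _ ≤ N := h2
    · exact h _ hle (by rw [hmod r hr j]; exact hr)
  have hcardT : T.card = R.card * t := by
    rw [hT, Finset.card_biUnion]
    · have : ∀ r ∈ R, ((Finset.range t).image (fun j => r + (N₀ + j) * M)).card = t := by
        intro r _
        rw [Finset.card_image_of_injective _ ?_, Finset.card_range]
        intro a b hab
        have h1 : (N₀ + a) * M = (N₀ + b) * M := Nat.add_left_cancel hab
        have h2 := Nat.eq_of_mul_eq_mul_right hM h1
        omega
      rw [Finset.sum_congr rfl this, Finset.sum_const, smul_eq_mul]
    · intro r hr r' hr' hne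
      rw [Function.onFun, Finset.disjoint_left]
      intro n hn hn'
      rw [Finset.mem_image] at hn hn'
      obtain ⟨j, _, rfl⟩ := hn
      obtain ⟨j', _, he⟩ := hn'
      apply hne
      have := hmod r' hr' j'
      rw [he] at this
      rw [hmod r hr j] at this
      exact this
  have hcard : (R.card * t : ℝ) ≤ (((Finset.range N).filter (· ∈ S)).card : ℝ) := by
    exact_mod_cast hcardT ▸ Finset.card_le_card hTsub
  have htR : ((N : ℝ) / M - (N₀ + 2)) ≤ (t : ℝ) := by
    have h1 : ((N / M : ℕ) : ℝ) > (N : ℝ) / M - 1 := by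
      have hdm := Nat.div_add_mod N M
      have hmlt := Nat.mod_lt N hM
      have hnat : N < M * (N / M) + M := by omega
      have h2 : (N : ℝ) < ((N / M : ℕ) + 1) * M := by
        push_cast
        exact_mod_cast (by push_cast; nlinarith [ (by exact_mod_cast hnat : (N:ℝ) < (M:ℝ) * ((N / M : ℕ):ℝ) + M) ] : (N : ℝ) < (((N / M : ℕ) : ℝ) + 1) * M)
      rw [gt_iff_lt, sub_lt_iff_lt_add, div_lt_iff₀ hM']
      nlinarith
    rcases le_total (N₀ + 1) (N / M) with hle | hle
    · have : (t : ℝ) = ((N / M : ℕ) : ℝ) - (N₀ + 1) := by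
        rw [ht]
        push_cast [hle]
        ring
      rw [this]
      linarith
    · have ht0 : t = 0 := by omega
      have : ((N / M : ℕ) : ℝ) ≤ (N₀ + 1 : ℝ) := by exact_mod_cast hle
      rw [ht0]
      push_cast
      linarith
  calc (R.card : ℝ) / M * N - R.card * (N₀ + 2)
      = R.card * ((N:ℝ)/M - (N₀ + 2)) := by ring
    _ ≤ R.card * t := by
        apply mul_le_mul_of_nonneg_left htR (by positivity)
    _ ≤ _ := hcard

lemma one_le_buckOuter_add_compl (S : Set ℕ) :
    1 ≤ buckOuter S + buckOuter Sᶜ := by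
  have h1 : (1 : ℝ) ≤ buckOuter Set.univ := by
    have := buckOuter_residues_ge 1 0 one_pos {0} (by simp) Set.univ
      (fun n _ _ => Set.mem_univ n)
    simpa using this
  calc (1:ℝ) ≤ buckOuter Set.univ := h1
    _ = buckOuter (S ∪ Sᶜ) := by rw [Set.union_compl_self]
    _ ≤ _ := buckOuter_union_le S Sᶜ



lemma mem_AP_iff_mod {r m n : ℕ} (hm : 0 < m) (h : r ≤ n) :
    n ∈ AP r m ↔ n % m = r % m := by
  constructor
  · rintro ⟨j, rfl⟩
    simp [Nat.add_mul_mod_self_right]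
  · intro he
    have hdvd : m ∣ n - r := (Nat.modEq_iff_dvd' h).1 he.symm
    obtain ⟨j, hj⟩ := hdvd
    refine ⟨j, ?_⟩
    rw [mul_comm]
    omega

lemma key_residue (S : Set ℕ) (M N₀ : ℕ) (hM : 0 < M)
    (h : ∀ a b, N₀ ≤ a → N₀ ≤ b → a % M = b % M → (a ∈ S ↔ b ∈ S)) :
    ∀ n, N₀ ≤ n → (n ∈ S ↔ n % M ∈
      (Finset.range M).filter (fun r => (N₀ / M + 1) * M + r ∈ S)) := by
  intro n hn
  set Q := (N₀ / M + 1) * M with hQ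
  have hQN : N₀ ≤ Q := by
    have hdm := Nat.div_add_mod N₀ M
    have := Nat.mod_lt N₀ hM
    rw [hQ, add_mul, one_mul, mul_comm]
    omega
  have hmem : n % M ∈ Finset.range M := Finset.mem_range.2 (Nat.mod_lt n hM)
  have hmod : (Q + n % M) % M = n % M := by
    rw [hQ, Nat.add_comm, Nat.add_mul_mod_self_right, Nat.mod_mod_of_dvd]
    exact dvd_refl M
  have := h n (Q + n % M) hn (le_trans hQN (Nat.le_add_right _ _)) (by rw [hmod])
  rw [Finset.mem_filter]
  constructor
  · intro hnS
    exact ⟨hmem, this.1 hnS⟩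
  · intro ⟨_, hq⟩
    exact this.2 hq

lemma eventuallyPeriodic_buckMeasurable (S : Set ℕ) (M N₀ : ℕ) (hM : 0 < M)
    (h : ∀ a b, N₀ ≤ a → N₀ ≤ b → a % M = b % M → (a ∈ S ↔ b ∈ S)) :
    BuckMeasurableSet S := by
  have hM' : (0:ℝ) < M := by exact_mod_cast hM
  set R := (Finset.range M).filter (fun r => (N₀ / M + 1) * M + r ∈ S) with hR
  have hkey := key_residue S M N₀ hM h
  have hRsub : R ⊆ Finset.range M := Finset.filter_subset _ _
  have h1 : buckOuter S ≤ (R.card : ℝ) / M :=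
    buckOuter_residues_le M N₀ hM R S (fun n hn hn0 => (hkey n hn0).1 hn)
  have h2 : (R.card : ℝ) / M ≤ buckOuter S :=
    buckOuter_residues_ge M N₀ hM R hRsub S (fun n hn0 hr => (hkey n hn0).2 hr)
  set Rc := Finset.range M \ R with hRc
  have hckey : ∀ n, N₀ ≤ n → (n ∈ Sᶜ ↔ n % M ∈ Rc) := by
    intro n hn0
    have hmem : n % M ∈ Finset.range M := Finset.mem_range.2 (Nat.mod_lt n hM)
    rw [hRc, Finset.mem_sdiff]
    constructor
    · intro hns
      exact ⟨hmem, fun hr => hns ((hkey n hn0).2 hr)⟩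
    · intro ⟨_, hr⟩ hns
      exact hr ((hkey n hn0).1 hns)
  have h3 : buckOuter Sᶜ ≤ (Rc.card : ℝ) / M :=
    buckOuter_residues_le M N₀ hM Rc Sᶜ (fun n hn hn0 => (hckey n hn0).1 hn)
  have h4 : (Rc.card : ℝ) / M ≤ buckOuter Sᶜ :=
    buckOuter_residues_ge M N₀ hM Rc (Finset.sdiff_subset) Sᶜ
      (fun n hn0 hr => (hckey n hn0).2 hr)
  have hcard : R.card + Rc.card = M := by
    rw [hRc]
    have h5 := Finset.card_sdiff_add_card_eq_card hRsub
    have h6 : (Finset.range M).card = M := Finset.card_range M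
    omega
  have e1 : buckOuter S = (R.card : ℝ) / M := le_antisymm h1 h2
  have e2 : buckOuter Sᶜ = (Rc.card : ℝ) / M := le_antisymm h3 h4
  rw [BuckMeasurableSet, e1, e2, ← add_div]
  rw [show ((R.card : ℝ) + Rc.card) = (M : ℝ) by exact_mod_cast congrArg (Nat.cast (R := ℝ)) hcard]
  field_simp



lemma approx (S : Set ℕ) (hS : BuckMeasurableSet S) (γ : ℝ) (hγ : 0 < γ) :
    ∃ (M N₀ : ℕ) (B : Set ℕ), 0 < M ∧ BuckMeasurableSet B ∧ buckOuter B < γ ∧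
      (∀ n, n < N₀ → n ∈ B) ∧
      (∀ a b, N₀ ≤ a → N₀ ≤ b → a % M = b % M → (a ∈ B ↔ b ∈ B)) ∧
      (∀ a b, a ∉ B → b ∉ B → a % M = b % M → (a ∈ S ↔ b ∈ S)) := by
  obtain ⟨k₁, r₁, m₁, hm₁, hc₁, hs₁⟩ :=
    exists_cover_lt (lt_add_of_pos_right (buckOuter S) (by positivity : (0:ℝ) < γ/2))
  obtain ⟨k₂, r₂, m₂, hm₂, hc₂, hs₂⟩ :=
    exists_cover_lt (lt_add_of_pos_right (buckOuter Sᶜ) (by positivity : (0:ℝ) < γ/2))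
  set U : Set ℕ := ⋃ j, AP (r₁ j) (m₁ j) with hU
  set W : Set ℕ := ⋃ j, AP (r₂ j) (m₂ j) with hW
  set M : ℕ := (∏ j, m₁ j) * (∏ j, m₂ j) with hM
  have hM0 : 0 < M := by
    rw [hM]
    exact Nat.mul_pos (Finset.prod_pos fun j _ => hm₁ j) (Finset.prod_pos fun j _ => hm₂ j)
  have hdvd₁ : ∀ j, m₁ j ∣ M := fun j =>
    Dvd.dvd.mul_right (Finset.dvd_prod_of_mem m₁ (Finset.mem_univ j)) _
  have hdvd₂ : ∀ j, m₂ j ∣ M := fun j =>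
    Dvd.dvd.mul_left (Finset.dvd_prod_of_mem m₂ (Finset.mem_univ j)) _
  set N₀ : ℕ := (Finset.univ.sup r₁) + (Finset.univ.sup r₂) + 1 with hN₀
  have hr₁le : ∀ j, r₁ j ≤ N₀ := fun j => by
    have := Finset.le_sup (f := r₁) (Finset.mem_univ j); omega
  have hr₂le : ∀ j, r₂ j ≤ N₀ := fun j => by
    have := Finset.le_sup (f := r₂) (Finset.mem_univ j); omega
  -- periodicity of U and W beyond N₀
  have hUper : ∀ a b, N₀ ≤ a → N₀ ≤ b → a % M = b % M → (a ∈ U ↔ b ∈ U) := by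
    intro a b ha hb hab
    have key : ∀ j, a % m₁ j = b % m₁ j := fun j =>
      (Nat.ModEq.of_dvd (hdvd₁ j) hab : a ≡ b [MOD m₁ j])
    rw [hU]
    simp only [Set.mem_iUnion]
    constructor <;> rintro ⟨j, hj⟩ <;> refine ⟨j, ?_⟩
    · rw [mem_AP_iff_mod (hm₁ j) ((hr₁le j).trans hb), ← key j,
        ← mem_AP_iff_mod (hm₁ j) ((hr₁le j).trans ha)]
      exact hj
    · rw [mem_AP_iff_mod (hm₁ j) ((hr₁le j).trans ha), key j,
        ← mem_AP_iff_mod (hm₁ j) ((hr₁le j).trans hb)]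
      exact hj
  have hWper : ∀ a b, N₀ ≤ a → N₀ ≤ b → a % M = b % M → (a ∈ W ↔ b ∈ W) := by
    intro a b ha hb hab
    have key : ∀ j, a % m₂ j = b % m₂ j := fun j =>
      (Nat.ModEq.of_dvd (hdvd₂ j) hab : a ≡ b [MOD m₂ j])
    rw [hW]
    simp only [Set.mem_iUnion]
    constructor <;> rintro ⟨j, hj⟩ <;> refine ⟨j, ?_⟩
    · rw [mem_AP_iff_mod (hm₂ j) ((hr₂le j).trans hb), ← key j,
        ← mem_AP_iff_mod (hm₂ j) ((hr₂le j).trans ha)]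
      exact hj
    · rw [mem_AP_iff_mod (hm₂ j) ((hr₂le j).trans ha), key j,
        ← mem_AP_iff_mod (hm₂ j) ((hr₂le j).trans hb)]
      exact hj
  set B : Set ℕ := {n | (n ∈ U ∧ n ∈ W) ∨ n < N₀} with hB
  have hBper : ∀ a b, N₀ ≤ a → N₀ ≤ b → a % M = b % M → (a ∈ B ↔ b ∈ B) := by
    intro a b ha hb hab
    rw [hB]
    simp only [Set.mem_setOf_eq]
    rw [hUper a b ha hb hab, hWper a b ha hb hab]
    have h1 : ¬ a < N₀ := not_lt.2 ha
    have h2 : ¬ b < N₀ := not_lt.2 hb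
    tauto
  have hUWuniv : ∀ n : ℕ, n ∈ U ∨ n ∈ W := by
    intro n
    by_cases hn : n ∈ S
    · exact Or.inl (hc₁ hn)
    · exact Or.inr (hc₂ hn)
  have hBmeas : BuckMeasurableSet B := eventuallyPeriodic_buckMeasurable B M N₀ hM0 hBper
  -- measure bound
  set Q := (N₀ / M + 1) * M with hQ
  set RU := (Finset.range M).filter (fun r => Q + r ∈ U) with hRU
  set RW := (Finset.range M).filter (fun r => Q + r ∈ W) with hRW
  have hUkey := key_residue U M N₀ hM0 hUper
  have hWkey := key_residue W M N₀ hM0 hWper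
  have hM' : (0:ℝ) < M := by exact_mod_cast hM0
  have hRUcard : (RU.card : ℝ) / M ≤ ∑ j, (1:ℝ) / (m₁ j) := by
    refine le_trans (buckOuter_residues_ge M N₀ hM0 RU (Finset.filter_subset _ _) U
      (fun n hn0 hr => (hUkey n hn0).2 hr)) ?_
    exact buckOuter_le_sum hm₁ (by rw [← hU])
  have hRWcard : (RW.card : ℝ) / M ≤ ∑ j, (1:ℝ) / (m₂ j) := by
    refine le_trans (buckOuter_residues_ge M N₀ hM0 RW (Finset.filter_subset _ _) W
      (fun n hn0 hr => (hWkey n hn0).2 hr)) ?_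
    exact buckOuter_le_sum hm₂ (by rw [← hW])
  have hRunion : RU ∪ RW = Finset.range M := by
    apply Finset.Subset.antisymm
    · intro r hr
      rcases Finset.mem_union.1 hr with h | h
      · exact (Finset.filter_subset _ _) h
      · exact (Finset.filter_subset _ _) h
    · intro r hr
      rcases hUWuniv (Q + r) with h | h
      · exact Finset.mem_union_left _ (Finset.mem_filter.2 ⟨hr, h⟩)
      · exact Finset.mem_union_right _ (Finset.mem_filter.2 ⟨hr, h⟩)
  have hBmeasure : buckOuter B < γ := by
    have hble : buckOuter B ≤ ((RU ∩ RW).card : ℝ) / M := by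
      apply buckOuter_residues_le M N₀ hM0 (RU ∩ RW) B
      intro n hn hn0
      have hnUW : n ∈ U ∧ n ∈ W := by
        rw [hB] at hn
        rcases hn with h | h
        · exact h
        · omega
      exact Finset.mem_inter.2 ⟨(hUkey n hn0).1 hnUW.1, (hWkey n hn0).1 hnUW.2⟩
    have hcardsum : RU.card + RW.card = M + (RU ∩ RW).card := by
      have := Finset.card_union_add_card_inter RU RW
      rw [hRunion, Finset.card_range] at this
      omega
    have hci : ((RU ∩ RW).card : ℝ) / M = (RU.card : ℝ)/M + (RW.card : ℝ)/M - 1 := by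
      field_simp
      push_cast
      have : ((RU.card : ℝ) + RW.card) = (M : ℝ) + ((RU ∩ RW).card : ℝ) := by
        exact_mod_cast congrArg (Nat.cast (R := ℝ)) hcardsum
      linarith
    have h1 := hS
    rw [BuckMeasurableSet] at h1
    calc buckOuter B ≤ _ := hble
      _ = _ := hci
      _ ≤ (∑ j, (1:ℝ) / (m₁ j)) + (∑ j, (1:ℝ) / (m₂ j)) - 1 := by linarith
      _ < (buckOuter S + γ/2) + (buckOuter Sᶜ + γ/2) - 1 := by linarith
      _ = γ := by linarith
  refine ⟨M, N₀, B, hM0, hBmeas, hBmeasure, ?_, hBper, ?_⟩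
  · intro n hn
    rw [hB]
    exact Or.inr hn
  · intro a b haB hbB hab
    have haN : N₀ ≤ a := by
      by_contra hc
      exact haB (by rw [hB]; exact Or.inr (by omega))
    have hbN : N₀ ≤ b := by
      by_contra hc
      exact hbB (by rw [hB]; exact Or.inr (by omega))
    have haUW : ¬(a ∈ U ∧ a ∈ W) := fun hc => haB (by rw [hB]; exact Or.inl hc)
    have hbUW : ¬(b ∈ U ∧ b ∈ W) := fun hc => hbB (by rw [hB]; exact Or.inl hc)
    constructor
    · intro haS
      have haU : a ∈ U := hc₁ haS
      have haW : a ∉ W := fun hw => haUW ⟨haU, hw⟩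
      have hbW : b ∉ W := fun hw => haW ((hWper a b haN hbN hab).2 hw)
      by_contra hbS
      exact hbW (hc₂ hbS)
    · intro hbS
      have hbU : b ∈ U := hc₁ hbS
      have hbW : b ∉ W := fun hw => hbUW ⟨hbU, hw⟩
      have haW : a ∉ W := fun hw => hbW ((hWper a b haN hbN hab).1 hw)
      by_contra haS
      exact haW (hc₂ haS)


lemma buckOuter_empty : buckOuter (∅ : Set ℕ) ≤ 0 := by
  have := buckOuter_residues_le 1 0 one_pos ∅ ∅ (fun n hn => absurd hn (Set.notMem_empty n))
  simpa using this

lemma buckOuter_biUnion_le {ι : Type*} (t : Finset ι) (f : ι → Set ℕ) :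
    buckOuter (⋃ i ∈ t, f i) ≤ ∑ i ∈ t, buckOuter (f i) := by
  induction t using Finset.induction with
  | empty => simpa using buckOuter_empty
  | insert a s hnotmem ih =>
    rw [Finset.set_biUnion_insert, Finset.sum_insert hnotmem]
    exact (buckOuter_union_le _ _).trans (by linarith)

lemma classes_le (m : ℕ) (hm : 0 < m) (R : Finset ℕ) :
    buckOuter {n : ℕ | n % m ∈ R} ≤ (R.card : ℝ) / m :=
  buckOuter_residues_le m 0 hm R _ (fun n hn _ => hn)

theorem wpc_to_wbm (v : ℕ → ℝ) (h : WeaklyPolyadiclyContinuous v) :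
    WeaklyBuckMeasurable v := by
  set F : ℝ → ℝ := fun x => buckOuter {n | v n < x} with hF
  have Fmono : Monotone F := fun x y hxy =>
    buckOuter_mono (fun n hn => lt_of_lt_of_le hn hxy)
  refine ⟨{x | ¬ContinuousAt F x}, Fmono.countable_not_continuousAt, ?_⟩
  intro x hx
  rw [Set.mem_setOf_eq, not_not] at hx
  apply le_antisymm _ (one_le_buckOuter_add_compl _)
  apply le_of_forall_pos_le_add
  intro η hη
  obtain ⟨δ', hδ', hcont⟩ := Metric.continuousAt_iff.1 hx (η/3) (by positivity)
  set ε := δ'/5 with hε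
  have hεpos : 0 < ε := by positivity
  have hFc : F x - F (x - 2*ε) < η/3 := by
    have := hcont (x := x - 2*ε) (by rw [Real.dist_eq]; rw [abs_sub_comm]; rw [abs_of_nonneg (by linarith)]; linarith)
    rw [Real.dist_eq] at this
    have := abs_lt.1 this
    linarith [this.1]
  obtain ⟨A, hAmeas, hAsize, m, hm, hcong⟩ := h ε hεpos (η/3) (by positivity)
  set R := (Finset.range m).filter
    (fun r => ∃ n, n ∉ A ∧ n % m = r ∧ v n < x - ε) with hR
  have hm' : (0:ℝ) < m := by exact_mod_cast hm
  have hRcard : R.card ≤ m := by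
    have := Finset.card_filter_le (Finset.range m)
      (fun r => ∃ n, n ∉ A ∧ n % m = r ∧ v n < x - ε)
    simpa using this
  -- (i)
  have hi : F (x - 2*ε) ≤ η/3 + (R.card : ℝ)/m := by
    have hsub : {n : ℕ | v n < x - 2*ε} ⊆ A ∪ {n : ℕ | n % m ∈ R} := by
      intro n hn
      by_cases hnA : n ∈ A
      · exact Or.inl hnA
      · refine Or.inr ?_
        rw [Set.mem_setOf_eq, hR, Finset.mem_filter]
        exact ⟨Finset.mem_range.2 (Nat.mod_lt n hm), n, hnA, rfl, by
          rw [Set.mem_setOf_eq] at hn; linarith⟩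
    calc F (x - 2*ε) ≤ buckOuter (A ∪ {n : ℕ | n % m ∈ R}) := buckOuter_mono hsub
      _ ≤ buckOuter A + buckOuter {n : ℕ | n % m ∈ R} := buckOuter_union_le _ _
      _ ≤ η/3 + (R.card : ℝ)/m := add_le_add hAsize.le (classes_le m hm R)
  -- (ii)
  have hii : buckOuter {n | v n < x}ᶜ ≤ η/3 + ((m : ℝ) - R.card)/m := by
    have hsub : {n : ℕ | v n < x}ᶜ ⊆ A ∪ {n : ℕ | n % m ∈ Finset.range m \ R} := by
      intro n hn
      rw [Set.mem_compl_iff, Set.mem_setOf_eq, not_lt] at hn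
      by_cases hnA : n ∈ A
      · exact Or.inl hnA
      · refine Or.inr ?_
        rw [Set.mem_setOf_eq, Finset.mem_sdiff]
        refine ⟨Finset.mem_range.2 (Nat.mod_lt n hm), ?_⟩
        intro hmem
        rw [hR, Finset.mem_filter] at hmem
        obtain ⟨-, n', hn'A, hn'mod, hn'v⟩ := hmem
        have := hcong n n' hnA hn'A (by rw [Nat.ModEq, hn'mod])
        have := abs_lt.1 this
        linarith [this.1]
    have hcard2 : ((Finset.range m \ R).card : ℝ) = (m : ℝ) - R.card := by
      have : (Finset.range m \ R).card = m - R.card := by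
        rw [Finset.card_sdiff_of_subset (by rw [hR]; exact Finset.filter_subset _ _)]
        simp
      rw [this]
      push_cast [hRcard]
      ring
    calc buckOuter {n | v n < x}ᶜ
        ≤ buckOuter A + buckOuter {n : ℕ | n % m ∈ Finset.range m \ R} :=
          (buckOuter_mono hsub).trans (buckOuter_union_le _ _)
      _ ≤ η/3 + ((m:ℝ) - R.card)/m := by
          refine add_le_add hAsize.le ?_
          rw [← hcard2]
          exact classes_le m hm _
  have expand : ((m:ℝ) - R.card)/m = 1 - (R.card : ℝ)/m := by field_simp
  calc buckOuter {n | v n < x} + buckOuter {n | v n < x}ᶜ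
      ≤ F x + (η/3 + (1 - (R.card : ℝ)/m)) := by
        rw [← expand]; exact add_le_add_right hii _
    _ ≤ F x + η/3 + 1 - (F (x - 2*ε) - η/3) := by linarith
    _ ≤ 1 + η := by linarith



theorem wbm_to_wpc (v : ℕ → ℝ) (C : ℝ) (hb : ∀ n, |v n| ≤ C)
    (h : WeaklyBuckMeasurable v) : WeaklyPolyadiclyContinuous v := by
  obtain ⟨Cex, hCexCount, hmeas⟩ := h
  intro ε hε δ hδ
  have hC0 : (0:ℝ) ≤ C := le_trans (abs_nonneg _) (hb 0)
  set s : ℝ := min (ε/2) (1/2) with hs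
  have hspos : 0 < s := by
    rw [hs]; positivity
  have hshalf : s ≤ 1/2 := min_le_right _ _
  have hseps : s ≤ ε/2 := min_le_left _ _
  set p : ℕ := ⌈(2*C+2)/s⌉₊ with hp
  set a : ℕ → ℝ := fun i => -C - 1 + i*s with ha
  have hdense : Dense Cexᶜ := hCexCount.dense_compl ℝ
  have hex : ∀ i : ℕ, ∃ y : ℝ, y ∈ Set.Ioo (a i) (a i + s) ∧ y ∉ Cex := by
    intro i
    obtain ⟨y, hy1, hy2⟩ := hdense.inter_open_nonempty (Set.Ioo (a i) (a i + s))
      isOpen_Ioo ⟨a i + s/2, by constructor <;> [linarith; linarith]⟩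
    exact ⟨y, hy1, hy2⟩
  choose x hx1 hx2 using hex
  have hxlt : ∀ i, x i ∈ Set.Ioo (a i) (a i + s) := hx1
  have hmono : ∀ i : ℕ, x i < x (i+1) := by
    intro i
    have h1 := (hxlt i).2
    have h2 := (hxlt (i+1)).1
    have : a (i+1) = a i + s := by rw [ha]; push_cast; ring
    linarith
  have hgap : ∀ i : ℕ, x (i+1) - x i < ε := by
    intro i
    have h1 := (hxlt i).1
    have h2 := (hxlt (i+1)).2
    have : a (i+1) = a i + s := by rw [ha]; push_cast; ring
    linarith
  have hx0 : x 0 < -C := by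
    have := (hxlt 0).2
    have ha0 : a 0 = -C - 1 := by rw [ha]; push_cast; ring
    rw [ha0] at this
    linarith
  have hxp : C < x p := by
    have h1 := (hxlt p).1
    have h2 : (2*C+2)/s ≤ (p:ℝ) := Nat.le_ceil _
    have h3 : 2*C+2 ≤ (p:ℝ)*s := by
      rw [div_le_iff₀ hspos] at h2
      linarith
    have hap : a p = -C-1 + p*s := rfl
    nlinarith
  -- apply approx to each level set
  set γ : ℝ := δ/(2*(p+1)) with hγdef
  have hγ : 0 < γ := by rw [hγdef]; positivity
  have happrox : ∀ i : ℕ, ∃ (M N₀ : ℕ) (B : Set ℕ), 0 < M ∧ BuckMeasurableSet B ∧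
      buckOuter B < γ ∧ (∀ n, n < N₀ → n ∈ B) ∧
      (∀ a b, N₀ ≤ a → N₀ ≤ b → a % M = b % M → (a ∈ B ↔ b ∈ B)) ∧
      (∀ a b, a ∉ B → b ∉ B → a % M = b % M →
        (a ∈ {n : ℕ | v n < x i} ↔ b ∈ {n : ℕ | v n < x i})) := by
    intro i
    exact approx {n : ℕ | v n < x i} (hmeas (x i) (hx2 i)) γ hγ
  choose M N₀ B hM0 hBmeas hBsize hBlow hBper hScong using happrox
  set Mstar : ℕ := ∏ i ∈ Finset.range (p+1), M i with hMstar
  have hMstar0 : 0 < Mstar := Finset.prod_pos (fun i _ => hM0 i)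
  have hMdvd : ∀ i ∈ Finset.range (p+1), M i ∣ Mstar :=
    fun i hi => Finset.dvd_prod_of_mem M hi
  set Nstar : ℕ := (Finset.range (p+1)).sup N₀ with hNstar
  set A : Set ℕ := ⋃ i ∈ Finset.range (p+1), B i with hA
  have hAmeas : BuckMeasurableSet A := by
    apply eventuallyPeriodic_buckMeasurable A Mstar Nstar hMstar0
    intro a' b' ha' hb' hab
    rw [hA]
    simp only [Set.mem_iUnion, exists_prop]
    constructor <;> rintro ⟨i, hi, hmem⟩ <;> refine ⟨i, hi, ?_⟩
    · have hNi : N₀ i ≤ Nstar := Finset.le_sup hi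
      exact (hBper i a' b' (le_trans hNi ha') (le_trans hNi hb')
        (Nat.ModEq.of_dvd (hMdvd i hi) hab)).1 hmem
    · have hNi : N₀ i ≤ Nstar := Finset.le_sup hi
      exact (hBper i a' b' (le_trans hNi ha') (le_trans hNi hb')
        (Nat.ModEq.of_dvd (hMdvd i hi) hab)).2 hmem
  have hAsize : buckOuter A < δ := by
    calc buckOuter A ≤ ∑ i ∈ Finset.range (p+1), buckOuter (B i) :=
        buckOuter_biUnion_le _ _
      _ < ∑ i ∈ Finset.range (p+1), γ :=
        Finset.sum_lt_sum_of_nonempty ⟨0, Finset.mem_range.2 (Nat.succ_pos p)⟩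
          (fun i _ => hBsize i)
      _ = (p+1) * γ := by rw [Finset.sum_const, Finset.card_range]; push_cast; ring
      _ = δ/2 := by rw [hγdef]; field_simp
      _ < δ := by linarith
  refine ⟨A, hAmeas, hAsize, Mstar, hMstar0, ?_⟩
  intro n₁ n₂ hn₁ hn₂ hmod
  have hnotB : ∀ i ∈ Finset.range (p+1), n₁ ∉ B i ∧ n₂ ∉ B i := by
    intro i hi
    constructor
    · intro hc; exact hn₁ (by rw [hA]; exact Set.mem_biUnion hi hc)
    · intro hc; exact hn₂ (by rw [hA]; exact Set.mem_biUnion hi hc)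
  have hiff : ∀ i ∈ Finset.range (p+1), (v n₁ < x i ↔ v n₂ < x i) := by
    intro i hi
    have := hScong i n₁ n₂ (hnotB i hi).1 (hnotB i hi).2
      (Nat.ModEq.of_dvd (hMdvd i hi) hmod)
    simpa using this
  -- locate v n₁ in the grid
  have hP : ∃ i : ℕ, v n₁ < x i := ⟨p, lt_of_le_of_lt (le_trans (le_abs_self _) (hb n₁)) hxp⟩
  set i₀ := Nat.find hP with hi₀
  have hPi₀ : v n₁ < x i₀ := Nat.find_spec hP
  have hi₀le : i₀ ≤ p := Nat.find_min' hP (lt_of_le_of_lt (le_trans (le_abs_self _) (hb n₁)) hxp)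
  have hi₀pos : 0 < i₀ := by
    rcases Nat.eq_zero_or_pos i₀ with h0 | h0
    · exfalso
      have : v n₁ < x 0 := h0 ▸ hPi₀
      have hlb : -C ≤ v n₁ := neg_le_of_abs_le (hb n₁)
      linarith
    · exact h0
  have hnotP : ¬ (v n₁ < x (i₀ - 1)) := Nat.find_min hP (by omega)
  have hmem1 : i₀ ∈ Finset.range (p+1) := Finset.mem_range.2 (by omega)
  have hmem2 : i₀ - 1 ∈ Finset.range (p+1) := Finset.mem_range.2 (by omega)
  have h2a : v n₂ < x i₀ := (hiff i₀ hmem1).1 hPi₀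
  have h2b : ¬ (v n₂ < x (i₀ - 1)) := fun hc => hnotP ((hiff _ hmem2).2 hc)
  push_neg at hnotP h2b
  have hgap' : x i₀ - x (i₀ - 1) < ε := by
    have := hgap (i₀ - 1)
    have he : i₀ - 1 + 1 = i₀ := by omega
    rw [he] at this
    exact this
  rw [abs_sub_lt_iff]
  constructor <;> linarith


end Buck

theorem weaklyBuckMeasurable_iff_weaklyPolyadiclyContinuous (v : ℕ → ℝ) (C : ℝ)
    (hb : ∀ n, |v n| ≤ C) :
    WeaklyBuckMeasurable v ↔ WeaklyPolyadiclyContinuous v :=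
  ⟨Buck.wbm_to_wpc v C hb, Buck.wpc_to_wbm v⟩
end
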